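/- arXiv:1605.07936 — 8 statements merged into one kernel-verified Lean document; each statement's English description precedes it below -/
import Mathlib

section
/- Let f be of product type with s_n(f) := Σ_{k>n} sup{|f_k(a)−f_k(b)| : a,b ∈ A}. For any m, k ∈ ℕ and points x, y ∈ A^ℕ agreeing in the first m+k coordinates, |S_m(f)(x) − S_m(f)(y)| ≤ Σ_{l=1}^{m} s_{l+k}(f), where S_m(f) = f + f∘T + ⋯ + f∘T^{m−1} and T is the left shift. -/
/-! `f x - f y` is the sum of the termwise differences `fn n (x n) - fn n (y n)`; when `x` and `y`
agree below `r` only the terms with `n ≥ r` survive, so `|f x - f y|` is at most the tail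
`∑_{n ≥ r} v n`. The `j`-th term of the Birkhoff sum compares two sequences that agree below
`m + k - j`, and summing these tail bounds over `j < m` gives the claim after reindexing `l = m - 1 - j`. -/

theorem hasSum_sub_of_eq_of_lt {A : Type*} {fn : ℕ → A → ℝ} {f : (ℕ → A) → ℝ}
    (hf : ∀ x : ℕ → A, HasSum (fun n => fn n (x n)) (f x))
    {r : ℕ} {x y : ℕ → A} (hxy : ∀ i < r, x i = y i) :
    HasSum (fun n => fn (n + r) (x (n + r)) - fn (n + r) (y (n + r))) (f x - f y) := by
  have head : ∑ i ∈ Finset.range r, (fn i (x i) - fn i (y i)) = 0 :=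
    Finset.sum_eq_zero fun i hi => by rw [hxy i (Finset.mem_range.mp hi), sub_self]
  simpa [head] using (hasSum_nat_add_iff' r).mpr ((hf x).sub (hf y))

theorem abs_sub_le_of_eq_of_lt {A : Type*} {fn : ℕ → A → ℝ} {f : (ℕ → A) → ℝ}
    (hf : ∀ x : ℕ → A, HasSum (fun n => fn n (x n)) (f x))
    {v : ℕ → ℝ} (hv : ∀ (n : ℕ) (a b : A), |fn n a - fn n b| ≤ v n)
    {r : ℕ} {s : ℝ} (hs : HasSum (fun n => v (r + n)) s)
    {x y : ℕ → A} (hxy : ∀ i < r, x i = y i) :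
    |f x - f y| ≤ s :=
  (hasSum_sub_of_eq_of_lt hf hxy).norm_le_of_bounded hs fun n => by
    rw [Real.norm_eq_abs, add_comm r]
    exact hv _ _ _

/-- For `f` of product type, if `x` and `y` agree on the first `m + k`
coordinates, then `|S_m(f)(x) − S_m(f)(y)| ≤ ∑_{l=1}^m s_{l+k}`, where `t r = ∑_{j ≥ r} v j`
(so `t (k + l + 1)` is the paper's `s_{l+k}`), `v n` bounds the oscillation of `fn n`,
and `S_m(f) = ∑_{j<m} f ∘ T^j` with `T` the left shift. -/
theorem stmt_1 {A : Type*} (fn : ℕ → A → ℝ) (f : (ℕ → A) → ℝ)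
    (hf : ∀ x : ℕ → A, HasSum (fun n => fn n (x n)) (f x))
    (v t : ℕ → ℝ)
    (hv : ∀ (n : ℕ) (a b : A), |fn n a - fn n b| ≤ v n)
    (ht : ∀ r : ℕ, HasSum (fun n => v (r + n)) (t r))
    (m k : ℕ) (x y : ℕ → A) (hxy : ∀ i < m + k, x i = y i) :
    |∑ j ∈ Finset.range m, f (fun i => x (i + j)) -
        ∑ j ∈ Finset.range m, f (fun i => y (i + j))| ≤
      ∑ l ∈ Finset.range m, t (k + l + 1) := by
  rw [← Finset.sum_sub_distrib, ← Finset.sum_range_reflect (fun l => t (k + l + 1))]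
  refine (Finset.abs_sum_le_sum_abs _ _).trans (Finset.sum_le_sum fun j hj => ?_)
  have hj := Finset.mem_range.mp hj
  refine abs_sub_le_of_eq_of_lt hf hv (ht _) fun i hi => hxy (i + j) (by omega)
end

section
/- Let f be of product type and suppose Σ_{n≥k} s_n(f) < ∞ for some k ∈ ℕ, where s_n(f) = Σ_{j>n} sup_{a,b∈A}|f_j(a)−f_j(b)|. Then f belongs to Bowen's class: sup_{n∈ℕ} var_{n+k}(S_n(f)) < ∞. -/
/-! If `x` and `y` agree on their first `m` coordinates, the product-type series for
`f x - f y` starts at index `m`, so `|f x - f y| ≤ t m`. Shifting by `j < n` leaves agreement on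
the first `n + k - j` coordinates, so the variation of the Birkhoff sum `S_n f` on cylinders of
length `n + k` is at most `∑_{j < n} t (j + 1 + k)`, bounded uniformly in `n` by the summability
of `t (· + k)`. -/

open Finset

section ProductType

variable {A : Type*} {fn : ℕ → A → ℝ} {f : (ℕ → A) → ℝ} {v t : ℕ → ℝ}

theorem abs_sub_le_tail_of_eq_of_lt
    (hf : ∀ x : ℕ → A, HasSum (fun n => fn n (x n)) (f x))
    (hv : ∀ (n : ℕ) (a b : A), |fn n a - fn n b| ≤ v n)
    (ht : ∀ r : ℕ, HasSum (fun n => v (r + n)) (t r))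
    {m : ℕ} {x y : ℕ → A} (hxy : ∀ i < m, x i = y i) :
    |f x - f y| ≤ t m := by
  have head : ∑ i ∈ range m, (fn i (x i) - fn i (y i)) = 0 :=
    sum_eq_zero fun i hi => by rw [hxy i (mem_range.mp hi), sub_self]
  have tail : HasSum (fun i => fn (m + i) (x (m + i)) - fn (m + i) (y (m + i))) (f x - f y) := by
    have := (hasSum_nat_add_iff' m).mpr ((hf x).sub (hf y))
    simpa only [head, sub_zero, add_comm m] using this
  have bound (i : ℕ) := abs_le.mp (hv (m + i) (x (m + i)) (y (m + i)))
  exact abs_le.mpr ⟨hasSum_le (fun i => (bound i).1) (ht m).neg tail,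
    hasSum_le (fun i => (bound i).2) tail (ht m)⟩

theorem abs_sum_shift_sub_le
    (hvar : ∀ (m : ℕ) (x y : ℕ → A), (∀ i < m, x i = y i) → |f x - f y| ≤ t m)
    {n k : ℕ} {x y : ℕ → A} (hxy : ∀ i < n + k, x i = y i) :
    |∑ j ∈ range n, f (fun i => x (i + j)) - ∑ j ∈ range n, f (fun i => y (i + j))| ≤
      ∑ j ∈ range n, t (j + 1 + k) :=
  calc _ = |∑ j ∈ range n, (f (fun i => x (i + j)) - f (fun i => y (i + j)))| := by
          rw [sum_sub_distrib]
    _ ≤ ∑ j ∈ range n, |f (fun i => x (i + j)) - f (fun i => y (i + j))| :=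
          abs_sum_le_sum_abs _ _
    _ ≤ ∑ j ∈ range n, t (n - 1 - j + 1 + k) :=
          sum_le_sum fun j hj => hvar _ _ _ fun i hi => hxy (i + j) (by grind)
    _ = ∑ j ∈ range n, t (j + 1 + k) := sum_range_reflect (fun j => t (j + 1 + k)) n

end ProductType

/-- If `∑_{n ≥ k} s_n(f) < ∞` (here `t r = ∑_{j ≥ r} v j` plays the role of
`s_{r}` up to the index convention, and we assume `fun n => t (n + k)` summable), then `f`
of product type belongs to Bowen's class: `sup_n var_{n+k}(S_n(f)) < ∞`. -/
theorem stmt_2 {A : Type*} (fn : ℕ → A → ℝ) (f : (ℕ → A) → ℝ)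
    (hf : ∀ x : ℕ → A, HasSum (fun n => fn n (x n)) (f x))
    (v t : ℕ → ℝ)
    (hv : ∀ (n : ℕ) (a b : A), |fn n a - fn n b| ≤ v n)
    (ht : ∀ r : ℕ, HasSum (fun n => v (r + n)) (t r))
    (k : ℕ) (hsum : Summable fun n => t (n + k)) :
    ∃ C : ℝ, ∀ (n : ℕ) (x y : ℕ → A), (∀ i < n + k, x i = y i) →
      |∑ j ∈ Finset.range n, f (fun i => x (i + j)) -
          ∑ j ∈ Finset.range n, f (fun i => y (i + j))| ≤ C := by
  have hvar (m : ℕ) (x y : ℕ → A) (hxy : ∀ i < m, x i = y i) : |f x - f y| ≤ t m :=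
    abs_sub_le_tail_of_eq_of_lt hf hv ht hxy
  refine ⟨∑' j, t (j + 1 + k), fun n x y hxy => ?_⟩
  -- `t ≥ 0` as soon as `A` is inhabited: compare `x` with itself.
  have t_nonneg (m : ℕ) : 0 ≤ t m := (abs_nonneg _).trans (hvar m x x fun _ _ => rfl)
  calc _ ≤ ∑ j ∈ range n, t (j + 1 + k) := abs_sum_shift_sub_le hvar hxy
    _ ≤ ∑' j, t (j + 1 + k) :=
        ((summable_nat_add_iff 1).mpr hsum).sum_le_tsum _ fun j _ => t_nonneg _
end

section
/- Let g(x) = Π_{n=1}^∞ g_n(x_n) be a positive potential of product type on A^ℕ. If μ = ⊗ μ_n is a product probability measure, positive on open sets, which is conformal for g (i.e. μ(T(C)) = λ ∫_C g dμ for all cylinders C and some λ > 0), then necessarily μ_n(a) = (Σ_{b∈A} Π_{i=1}^n g_i(a)/g_i(b))^{−1} for all n ∈ ℕ and a ∈ A. In particular such a conformal product measure is unique. -/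
/-!
Feeding the conformality identity two cylinders that differ only in their last symbol `x`
shows that `w n x` is a constant multiple of `g (n + 1) x * w (n + 1) x`. By induction on `n`,
`w n x * ∏_{i ≤ n} g i x` is then independent of `x`, and normalising `w n` to a probability
vector determines that constant.
-/

open Finset

theorem prod_range_succ_ite {α M : Type*} [CommMonoid M] (f : ℕ → α → M) (n : ℕ) (x d : α) :
    ∏ i ∈ range (n + 1), f i (if i = n then x else d) = (∏ i ∈ range n, f i d) * f n x := by
  rw [prod_range_succ, if_pos rfl]
  congr 1
  exact prod_congr rfl fun i hi => by rw [if_neg (mem_range.mp hi).ne]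

theorem eq_inv_tsum_div_of_mul_eq_const {A : Type*} {w p : A → ℝ} {c : ℝ} (hw : HasSum w 1)
    (hp : ∀ b, p b ≠ 0) (hc : ∀ b, w b * p b = c) (a : A) :
    w a = (∑' b, p a / p b)⁻¹ := by
  have hw_eq : w = fun b => c / p b := funext fun b => eq_div_of_mul_eq (hp b) (hc b)
  rw [hw_eq] at hw ⊢
  have hc0 : c ≠ 0 := by
    rintro rfl
    simp only [zero_div] at hw
    exact one_ne_zero (hasSum_zero.unique hw).symm
  have hsum : HasSum (fun b => p a / p b) (p a / c) := by
    have h_eq : (fun b => p a / p b) = fun b => p a / c * (c / p b) := by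
      funext b
      field_simp
    simpa [h_eq] using hw.mul_left (p a / c)
  rw [hsum.tsum_eq, inv_div]

/-- The conformality identity `μ(T[a₀ … aₙ]) = λ ∫_{[a₀ … aₙ]} g dμ` for the product measure
whose `(i + 1)`-st marginal is `w i`; the last factor is the integral over the free coordinates
`i > n` of the potential. -/
def IsConformalProduct {A : Type*} (g w : ℕ → A → ℝ) (lam : ℝ) : Prop :=
  ∀ (n : ℕ) (a : ℕ → A),
    ∏ i ∈ range n, w i (a (i + 1)) =
      lam * (∏ i ∈ range (n + 1), g i (a i) * w i (a i)) *
        ∏' i : ℕ, ∑' b : A, g (n + 1 + i) b * w (n + 1 + i) b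

namespace IsConformalProduct

variable {A : Type*} {g w : ℕ → A → ℝ} {lam : ℝ}

theorem exists_weight_eq_mul_succ (hconf : IsConformalProduct g w lam)
    (hw : ∀ n a, w n a ≠ 0) (d : A) (n : ℕ) :
    ∃ K, ∀ x, w n x = K * (g (n + 1) x * w (n + 1) x) := by
  have hQ : ∏ i ∈ range n, w i d ≠ 0 := prod_ne_zero_iff.mpr fun i _ => hw i d
  refine ⟨lam * (∏ i ∈ range (n + 1), g i d * w i d) *
      (∏' i : ℕ, ∑' b : A, g (n + 1 + 1 + i) b * w (n + 1 + 1 + i) b) /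
        ∏ i ∈ range n, w i d, fun x => ?_⟩
  have h := hconf (n + 1) fun j => if j = n + 1 then x else d
  simp only [add_left_inj] at h
  rw [prod_range_succ_ite w, prod_range_succ_ite (fun i y => g i y * w i y)] at h
  field_simp
  linear_combination h

theorem exists_weight_mul_prod_eq_const (hconf : IsConformalProduct g w lam)
    (hw : ∀ n a, w n a ≠ 0) (d : A) (n : ℕ) :
    ∃ c, ∀ x, w n x * ∏ i ∈ range (n + 1), g i x = c := by
  induction n with
  | zero =>
    refine ⟨(lam * ∏' i : ℕ, ∑' b : A, g (0 + 1 + i) b * w (0 + 1 + i) b)⁻¹, fun x => ?_⟩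
    have h := hconf 0 fun _ => x
    simp only [prod_range_zero, zero_add, prod_range_one] at h ⊢
    exact eq_inv_of_mul_eq_one_left (by linear_combination -h)
  | succ n ih =>
    obtain ⟨c, hc⟩ := ih
    obtain ⟨K, hK⟩ := hconf.exists_weight_eq_mul_succ hw d n
    have hK0 : K ≠ 0 := by
      rintro rfl
      exact hw n d (by simpa using hK d)
    refine ⟨c / K, fun x => ?_⟩
    rw [prod_range_succ, ← hc x, hK x]
    field_simp

end IsConformalProduct

theorem stmt_5_general {A : Type*}
    (g : ℕ → A → ℝ) (hg : ∀ (n : ℕ) (a : A), 0 < g n a)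
    (w : ℕ → A → ℝ) (hw_pos : ∀ (n : ℕ) (a : A), 0 < w n a)
    (hw_prob : ∀ n : ℕ, HasSum (w n) 1)
    (lam : ℝ)
    (hconf : ∀ (n : ℕ) (a : ℕ → A),
      ∏ i ∈ Finset.range n, w i (a (i + 1)) =
        lam * (∏ i ∈ Finset.range (n + 1), g i (a i) * w i (a i)) *
          ∏' i : ℕ, ∑' b : A, g (n + 1 + i) b * w (n + 1 + i) b) :
    ∀ (n : ℕ) (a : A),
      w n a = (∑' b : A, ∏ i ∈ Finset.range (n + 1), g i a / g i b)⁻¹ := by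
  intro n a
  obtain ⟨d⟩ : Nonempty A := by
    by_contra h
    rw [not_nonempty_iff] at h
    exact one_ne_zero ((hw_prob 0).unique hasSum_empty)
  obtain ⟨c, hc⟩ :=
    IsConformalProduct.exists_weight_mul_prod_eq_const hconf (fun n a => (hw_pos n a).ne') d n
  simp_rw [prod_div_distrib]
  exact eq_inv_tsum_div_of_mul_eq_const (hw_prob n)
    (fun b => prod_ne_zero_iff.mpr fun i _ => (hg i b).ne') hc a

/-- Let `g(x) = ∏ g_n(x_n)` be a positive potential of product type and
`μ = ⊗ μ_n` a product probability measure (weights `w n`, positive, summing to `1`)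
which is conformal for `g` with parameter `λ > 0`, i.e. `μ(T(C)) = λ ∫_C g dμ` on all
cylinders — which, for a product measure, is exactly the displayed family of identities
(`w i` indexed from `0`, the tail integral being `∏_{i > n} ∑_b g_i(b) w_i(b)`).
Then necessarily `w n a = (∑_b ∏_{i=1}^{n+1} g_i(a)/g_i(b))⁻¹`; in particular the
conformal product measure is unique. -/
theorem stmt_5 {A : Type*} [Countable A]
    (g : ℕ → A → ℝ) (hg : ∀ (n : ℕ) (a : A), 0 < g n a)
    (w : ℕ → A → ℝ) (hw_pos : ∀ (n : ℕ) (a : A), 0 < w n a)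
    (hw_prob : ∀ n : ℕ, HasSum (w n) 1)
    (lam : ℝ) (hlam : 0 < lam)
    (hconf : ∀ (n : ℕ) (a : ℕ → A),
      ∏ i ∈ Finset.range n, w i (a (i + 1)) =
        lam * (∏ i ∈ Finset.range (n + 1), g i (a i) * w i (a i)) *
          ∏' i : ℕ, ∑' b : A, g (n + 1 + i) b * w (n + 1 + i) b) :
    ∀ (n : ℕ) (a : A),
      w n a = (∑' b : A, ∏ i ∈ Finset.range (n + 1), g i a / g i b)⁻¹ :=
  stmt_5_general g hg w hw_pos hw_prob lam hconf
end

section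
/- Under the hypothesis of Theorem (uniqueness of conformal measures): if A is finite, any two conformal measures μ, ν for g (with g of product type satisfying the double summability condition Σ_{i} Σ_{k≥i} log max{‖g_k‖_∞, ‖g_k^{−1}‖_∞} < ∞) satisfy K^{−1} ≤ μ([a_1,…,a_n])/ν([a_1,…,a_n]) ≤ K for all cylinders, where K = Π_{i=1}^∞ K_i and K_i = Π_{k=i}^∞ max{‖g_k‖_∞^2, ‖g_k^{−1}‖_∞^2}. In particular μ and ν are equivalent measures. -/
open MeasureTheory

/-- The left shift on `A^ℕ`. -/
def shiftMap (A : Type*) : (ℕ → A) → ℕ → A := fun x n => x (n + 1)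

/-- `ν` is conformal for the potential `G` with parameter `lam`. -/
def IsConformalFor {A : Type*} [MeasurableSpace A] (G : (ℕ → A) → ℝ) (lam : ℝ)
    (ν : Measure (ℕ → A)) : Prop :=
  ∀ C : Set (ℕ → A), MeasurableSet C → Set.InjOn (shiftMap A) C →
    ν (shiftMap A '' C) = ENNReal.ofReal (lam * ∫ x in C, G x ∂ν)

/-!
On a cylinder `C = [a_0, …, a_m]` the potential `G = g0 ∏ g_i` equals `g0 ∏_{i ≤ m} g_i(a_i)` up to
a factor `exp (± T_{m+1})`, where `T_m = ∑_{k ≥ m} log max {‖g_k‖_∞, ‖g_k⁻¹‖_∞}`. Conformality,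
`ρ (σ C) = λ ∫_C G dρ`, therefore determines `ρ C` from `ρ (σ C)` up to the same factor, and
induction on the length gives `μ C ≤ (λ_ν / λ_μ)^n exp (2 ∑_{m ≤ n} T_m) ν C`. Summing over all
cylinders of a given length forces `λ_μ = λ_ν`, leaving the constant
`K = exp (2 ∑_m T_m) = ∏_i K_i`. A bound on cylinders passes to open sets, hence by outer
regularity to all measurable sets, so `μ ≤ K ν`.
-/

open Set Filter Topology
open scoped ENNReal

namespace ProductPotential

section Cylinders

variable {A : Type*}

def cylinder (n : ℕ) (a : ℕ → A) : Set (ℕ → A) := {x | ∀ i < n, x i = a i}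

def initialWord (n : ℕ) (x : ℕ → A) : Fin n → A := fun i => x i

lemma cylinder_eq_preimage_initialWord (n : ℕ) (a : ℕ → A) :
    cylinder n a = initialWord n ⁻¹' {initialWord n a} := by
  ext x
  simp only [cylinder, initialWord, mem_ofPred_eq, mem_preimage, mem_singleton_iff, funext_iff,
    Fin.forall_iff]

lemma mem_cylinder_self (n : ℕ) (a : ℕ → A) : a ∈ cylinder n a := fun _ _ => rfl

lemma cylinder_zero (a : ℕ → A) : cylinder 0 a = univ := by
  ext x
  simp [cylinder]

lemma shiftMap_image_cylinder_succ (n : ℕ) (a : ℕ → A) :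
    shiftMap A '' cylinder (n + 1) a = cylinder n (fun i => a (i + 1)) := by
  ext y
  constructor
  · rintro ⟨x, hx, rfl⟩ i hi
    exact hx (i + 1) (by omega)
  · intro hy
    refine ⟨fun i => Nat.casesOn i (a 0) y, fun i hi => ?_, rfl⟩
    cases i with
    | zero => rfl
    | succ j => exact hy j (by omega)

lemma injOn_shiftMap_cylinder_succ (n : ℕ) (a : ℕ → A) :
    InjOn (shiftMap A) (cylinder (n + 1) a) := by
  intro x hx y hy h
  funext i
  cases i with
  | zero => rw [hx 0 n.succ_pos, hy 0 n.succ_pos]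
  | succ j => exact congrFun h j

variable [MeasurableSpace A] [MeasurableSingletonClass A]

lemma measurableSet_cylinder (n : ℕ) (a : ℕ → A) : MeasurableSet (cylinder n a) := by
  have : cylinder n a = ⋂ i ∈ Finset.range n, (fun x : ℕ → A => x i) ⁻¹' {a i} := by
    ext x
    simp [cylinder]
  rw [this]
  exact .biInter (Finset.range n).countable_toSet fun i _ =>
    measurable_pi_apply i (measurableSet_singleton (a i))

end Cylinders

section Comparison

variable {α β : Type*} [MeasurableSpace α] [Finite β] {μ ν : Measure α} {c : ℝ≥0∞}

lemma measure_preimage_le_of_forall_fiber_le {f : α → β}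
    (hf : ∀ b, MeasurableSet (f ⁻¹' {b})) (h : ∀ b, μ (f ⁻¹' {b}) ≤ c * ν (f ⁻¹' {b}))
    (W : Set β) : μ (f ⁻¹' W) ≤ c * ν (f ⁻¹' W) := by
  have hW : W = ↑W.toFinite.toFinset := W.toFinite.coe_toFinset.symm
  rw [hW, ← sum_measure_preimage_singleton _ fun b _ => hf b,
    ← sum_measure_preimage_singleton _ fun b _ => hf b, Finset.mul_sum]
  exact Finset.sum_le_sum fun b _ => h b

variable {A : Type*} [MeasurableSpace A] [MeasurableSingletonClass A] [Finite A]
  {μ ν : Measure (ℕ → A)}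

lemma measure_preimage_initialWord_le {n : ℕ}
    (h : ∀ a, μ (cylinder n a) ≤ c * ν (cylinder n a)) (W : Set (Fin n → A)) :
    μ (initialWord n ⁻¹' W) ≤ c * ν (initialWord n ⁻¹' W) := by
  have hfiber : ∀ w : Fin n → A,
      initialWord n ⁻¹' {w} = ∅ ∨ ∃ x, initialWord n ⁻¹' {w} = cylinder n x := by
    intro w
    refine (eq_empty_or_nonempty _).imp id fun ⟨x, hx⟩ => ⟨x, ?_⟩
    rw [cylinder_eq_preimage_initialWord, hx]
  refine measure_preimage_le_of_forall_fiber_le (fun w => ?_) (fun w => ?_) W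
  all_goals rcases hfiber w with hw | ⟨x, hw⟩
  all_goals simp only [hw, measure_empty, zero_le, MeasurableSet.empty, measurableSet_cylinder, h]

lemma measure_isOpen_le_of_forall_cylinder_le [TopologicalSpace A] [DiscreteTopology A]
    (h : ∀ n a, μ (cylinder n a) ≤ c * ν (cylinder n a)) {U : Set (ℕ → A)} (hU : IsOpen U) :
    μ U ≤ c * ν U := by
  -- `U` is the increasing union of the sets `S n`, each a union of cylinders of length `n`.
  set S : ℕ → Set (ℕ → A) := fun n => {x | cylinder n x ⊆ U}
  have hS_sub : ∀ n, S n ⊆ U := fun n x hx => hx (mem_cylinder_self n x)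
  have hS_mono : Monotone S := fun m n hmn x hx y hy => hx fun i hi => hy i (hi.trans_le hmn)
  have hU_eq : U = ⋃ n, S n := by
    refine (iUnion_subset hS_sub).antisymm' fun x hx => ?_
    obtain ⟨I, u, hIu, hpi⟩ := isOpen_pi_iff.1 hU x hx
    refine mem_iUnion.2 ⟨I.sup id + 1, fun y hy => hpi fun i hi => ?_⟩
    rw [hy i (Nat.lt_succ_of_le (Finset.le_sup (f := id) hi))]
    exact (hIu i hi).2
  have hS_preimage : ∀ n, S n = initialWord n ⁻¹' (initialWord n '' S n) := by
    intro n
    refine (subset_preimage_image _ _).antisymm ?_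
    rintro x ⟨y, hy, hxy⟩
    change cylinder n x ⊆ U
    rwa [cylinder_eq_preimage_initialWord, ← hxy, ← cylinder_eq_preimage_initialWord]
  rw [hU_eq, hS_mono.measure_iUnion, hS_mono.measure_iUnion, ENNReal.mul_iSup]
  refine iSup_mono fun n => ?_
  rw [hS_preimage n]
  exact measure_preimage_initialWord_le (h n) _

lemma le_smul_of_forall_cylinder_le [IsFiniteMeasure ν] (hc : c ≠ ∞)
    (h : ∀ n a, μ (cylinder n a) ≤ c * ν (cylinder n a)) : μ ≤ c • ν := by
  let _ : TopologicalSpace A := ⊥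
  have _ : DiscreteTopology A := ⟨rfl⟩
  have _ : BorelSpace (ℕ → A) := Pi.borelSpace
  have _ : (c • ν).OuterRegular := .smul ν hc
  refine Measure.le_iff'.2 fun s => le_of_not_gt fun hlt => ?_
  obtain ⟨U, hsU, hU, hUlt⟩ := s.exists_isOpen_lt_of_lt _ hlt
  exact (hUlt.trans_le (measure_mono hsU)).not_ge (measure_isOpen_le_of_forall_cylinder_le h hU)

end Comparison

section Potential

open Real

variable {A : Type*} (g : ℕ → A → ℝ)

noncomputable def maxSupNorm (k : ℕ) : ℝ := ⨆ a : A, max (g k a) (g k a)⁻¹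

def DoublySummable : Prop := Summable fun p : ℕ × ℕ => log (maxSupNorm g (p.1 + p.2))

noncomputable def tailSum (m : ℕ) : ℝ := ∑' j, log (maxSupNorm g (m + j))

noncomputable def cylinderLogWeight (m : ℕ) (a : ℕ → A) : ℝ :=
  ∑ i ∈ Finset.range m, log (g i (a i))

noncomputable def productPotential (g0 : ℝ) (x : ℕ → A) : ℝ := g0 * ∏' i, g i (x i)

variable {g}

lemma le_maxSupNorm [Finite A] (k : ℕ) (a : A) : max (g k a) (g k a)⁻¹ ≤ maxSupNorm g k :=
  le_ciSup (finite_range fun a => max (g k a) (g k a)⁻¹).bddAbove a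

lemma maxSupNorm_pos [Finite A] [Nonempty A] (hg : ∀ k a, 0 < g k a) (k : ℕ) :
    0 < maxSupNorm g k :=
  (hg k _).trans_le ((le_max_left _ _).trans (le_maxSupNorm k (Classical.arbitrary A)))

lemma abs_log_le_log_maxSupNorm [Finite A] (hg : ∀ k a, 0 < g k a) (k : ℕ) (a : A) :
    |log (g k a)| ≤ log (maxSupNorm g k) := by
  have hle := le_maxSupNorm (g := g) k a
  rw [abs_le, neg_le, ← log_inv]
  exact ⟨log_le_log (inv_pos.2 (hg k a)) ((le_max_right _ _).trans hle),
    log_le_log (hg k a) ((le_max_left _ _).trans hle)⟩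

lemma log_maxSupNorm_nonneg [Finite A] [Nonempty A] (hg : ∀ k a, 0 < g k a) (k : ℕ) :
    0 ≤ log (maxSupNorm g k) :=
  (abs_nonneg _).trans (abs_log_le_log_maxSupNorm hg k (Classical.arbitrary A))

lemma tailSum_nonneg [Finite A] [Nonempty A] (hg : ∀ k a, 0 < g k a) (m : ℕ) : 0 ≤ tailSum g m :=
  tsum_nonneg fun j => log_maxSupNorm_nonneg hg (m + j)

namespace DoublySummable

variable (hsum : DoublySummable g)
include hsum

lemma hasSum_tailSum (m : ℕ) : HasSum (fun j => log (maxSupNorm g (m + j))) (tailSum g m) :=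
  (hsum.prod_factor m).hasSum

lemma summable_tailSum : Summable (tailSum g) := hsum.prod

variable [Finite A]

lemma summable_log_apply (hg : ∀ k a, 0 < g k a) (x : ℕ → A) :
    Summable fun i => log (g i (x i)) :=
  .of_norm_bounded (by simpa using hsum.prod_factor 0) fun i =>
    abs_log_le_log_maxSupNorm hg i (x i)

lemma productPotential_eq (hg : ∀ k a, 0 < g k a) (g0 : ℝ) (x : ℕ → A) :
    productPotential g g0 x = g0 * exp (∑' i, log (g i (x i))) := by
  rw [rexp_tsum_eq_tprod (fun i => hg i (x i)) (hsum.summable_log_apply hg x), productPotential]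

lemma abs_tsum_log_sub_sum_le_tailSum (hg : ∀ k a, 0 < g k a) {m : ℕ} {a x : ℕ → A}
    (hx : x ∈ cylinder m a) :
    |∑' i, log (g i (x i)) - cylinderLogWeight g m a| ≤ tailSum g m := by
  rw [cylinderLogWeight, ← (hsum.summable_log_apply hg x).sum_add_tsum_nat_add m,
    Finset.sum_congr rfl fun i hi => by rw [hx i (Finset.mem_range.1 hi)], add_sub_cancel_left]
  exact tsum_of_norm_bounded (f := fun j => log (g (j + m) (x (j + m))))
    (hsum.hasSum_tailSum m) fun j => by
      simpa only [add_comm j m, norm_eq_abs] using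
        abs_log_le_log_maxSupNorm hg (j + m) (x (j + m))

lemma productPotential_mem_Icc (hg : ∀ k a, 0 < g k a) {g0 : ℝ} (hg0 : 0 ≤ g0) {m : ℕ}
    {a x : ℕ → A} (hx : x ∈ cylinder m a) :
    productPotential g g0 x ∈
      Icc (g0 * exp (cylinderLogWeight g m a - tailSum g m))
        (g0 * exp (cylinderLogWeight g m a + tailSum g m)) := by
  obtain ⟨hlo, hhi⟩ := abs_sub_le_iff.1 (hsum.abs_tsum_log_sub_sum_le_tailSum hg hx)
  rw [hsum.productPotential_eq hg]
  exact ⟨by gcongr; linarith, by gcongr; linarith⟩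

lemma productPotential_nonneg (hg : ∀ k a, 0 < g k a) {g0 : ℝ} (hg0 : 0 ≤ g0) (x : ℕ → A) :
    0 ≤ productPotential g g0 x := by
  rw [hsum.productPotential_eq hg]
  positivity

lemma sum_range_tailSum_succ_le_tsum [Nonempty A] (hg : ∀ k a, 0 < g k a) (n : ℕ) :
    ∑ m ∈ Finset.range n, tailSum g (m + 1) ≤ ∑' m, tailSum g m := by
  calc ∑ m ∈ Finset.range n, tailSum g (m + 1)
      ≤ ∑ m ∈ Finset.range n, tailSum g (m + 1) + tailSum g 0 :=
        le_add_of_nonneg_right (tailSum_nonneg hg 0)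
    _ = ∑ m ∈ Finset.range (n + 1), tailSum g m := (Finset.sum_range_succ' _ n).symm
    _ ≤ ∑' m, tailSum g m := hsum.summable_tailSum.sum_le_tsum _ fun m _ => tailSum_nonneg hg m

lemma tprod_tprod_maxSupNorm_sq [Nonempty A] (hg : ∀ k a, 0 < g k a) :
    ∏' i, ∏' j, maxSupNorm g (i + j) ^ 2 = exp (2 * ∑' i, tailSum g i) := by
  have inner : ∀ i, ∏' j, maxSupNorm g (i + j) ^ 2 = exp (2 * tailSum g i) := fun i =>
    (hasProd_of_hasSum_log (fun j => pow_pos (maxSupNorm_pos hg _) 2)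
      (by simpa only [log_pow, Nat.cast_ofNat] using (hsum.hasSum_tailSum i).mul_left 2)).tprod_eq
  simp_rw [inner]
  exact ((hsum.summable_tailSum.hasSum.mul_left 2).rexp).tprod_eq

end DoublySummable

end Potential

section Conformal

open Real

variable {A : Type*} [Finite A] [MeasurableSpace A] [MeasurableSingletonClass A]
  {g : ℕ → A → ℝ} {g0 : ℝ}

namespace DoublySummable

variable (hsum : DoublySummable g)
include hsum

lemma measurable_productPotential (hg : ∀ k a, 0 < g k a) (g0 : ℝ) :
    Measurable (productPotential g g0) := by
  refine measurable_of_tendsto_metrizable' atTop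
    (f := fun n x => g0 * ∏ i ∈ Finset.range n, g i (x i))
    (fun n => by fun_prop) (tendsto_pi_nhds.2 fun x => ?_)
  exact ((multipliable_of_summable_log (fun i => hg i (x i))
    (hsum.summable_log_apply hg x)).hasProd.tendsto_prod_nat).const_mul g0

lemma integrable_productPotential (hg : ∀ k a, 0 < g k a) (hg0 : 0 ≤ g0) (ρ : Measure (ℕ → A))
    [IsFiniteMeasure ρ] : Integrable (productPotential g g0) ρ := by
  refine .of_bound (hsum.measurable_productPotential hg g0).aestronglyMeasurable
    (g0 * exp (tailSum g 0)) (ae_of_all _ fun x => ?_)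
  rw [Real.norm_eq_abs, abs_of_nonneg (hsum.productPotential_nonneg hg hg0 x)]
  simpa [cylinderLogWeight] using (hsum.productPotential_mem_Icc hg hg0 (mem_cylinder_self 0 x)).2

lemma measureReal_shift_cylinder_mem_Icc (hg : ∀ k a, 0 < g k a) (hg0 : 0 ≤ g0)
    {ρ : Measure (ℕ → A)} [IsFiniteMeasure ρ] {lam : ℝ} (hlam : 0 ≤ lam)
    (hρ : IsConformalFor (productPotential g g0) lam ρ) (m : ℕ) (a : ℕ → A) :
    ρ.real (cylinder m fun i => a (i + 1)) ∈
      Icc (lam * (g0 * exp (cylinderLogWeight g (m + 1) a - tailSum g (m + 1))) *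
          ρ.real (cylinder (m + 1) a))
        (lam * (g0 * exp (cylinderLogWeight g (m + 1) a + tailSum g (m + 1))) *
          ρ.real (cylinder (m + 1) a)) := by
  have hC := measurableSet_cylinder (m + 1) a
  have hint := (hsum.integrable_productPotential hg hg0 ρ).integrableOn (s := cylinder (m + 1) a)
  have hlo := setIntegral_ge_of_const_le_real hC (measure_ne_top _ _)
    (fun x hx => (hsum.productPotential_mem_Icc hg hg0 hx).1) hint
  have hhi := setIntegral_mono_on hint (integrableOn_const (measure_ne_top _ _)) hC
    (fun x hx => (hsum.productPotential_mem_Icc hg hg0 hx).2)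
  rw [setIntegral_const, smul_eq_mul, mul_comm] at hhi
  have hconf : ρ.real (cylinder m fun i => a (i + 1)) =
      lam * ∫ x in cylinder (m + 1) a, productPotential g g0 x ∂ρ := by
    rw [← shiftMap_image_cylinder_succ, measureReal_def, hρ _ hC (injOn_shiftMap_cylinder_succ m a),
      ENNReal.toReal_ofReal (mul_nonneg hlam (setIntegral_nonneg hC fun x _ =>
        hsum.productPotential_nonneg hg hg0 x))]
  rw [hconf, mul_assoc _ (g0 * _), mul_assoc _ (g0 * _)]
  exact ⟨mul_le_mul_of_nonneg_left hlo hlam, mul_le_mul_of_nonneg_left hhi hlam⟩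

lemma measureReal_cylinder_le [Nonempty A] (hg : ∀ k a, 0 < g k a) (hg0 : 0 < g0)
    {μ ν : Measure (ℕ → A)} [IsProbabilityMeasure μ] [IsProbabilityMeasure ν] {lamμ lamν : ℝ}
    (hlamμ : 0 < lamμ) (hlamν : 0 ≤ lamν)
    (hμ : IsConformalFor (productPotential g g0) lamμ μ)
    (hν : IsConformalFor (productPotential g g0) lamν ν) (n : ℕ) (a : ℕ → A) :
    μ.real (cylinder n a) ≤ (lamν / lamμ) ^ n *
      exp (2 * ∑ m ∈ Finset.range n, tailSum g (m + 1)) * ν.real (cylinder n a) := by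
  induction n generalizing a with
  | zero => simp [cylinder_zero]
  | succ n ih =>
    set W := cylinderLogWeight g (n + 1) a
    set T := tailSum g (n + 1)
    set S := ∑ m ∈ Finset.range n, tailSum g (m + 1)
    have hμ_step := (hsum.measureReal_shift_cylinder_mem_Icc hg hg0.le hlamμ.le hμ n a).1
    have hν_step := (hsum.measureReal_shift_cylinder_mem_Icc hg hg0.le hlamν hν n a).2
    have hc : 0 < lamμ * (g0 * exp (W - T)) := by positivity
    refine le_of_mul_le_mul_left ?_ hc
    calc lamμ * (g0 * exp (W - T)) * μ.real (cylinder (n + 1) a)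
        ≤ μ.real (cylinder n fun i => a (i + 1)) := hμ_step
      _ ≤ (lamν / lamμ) ^ n * exp (2 * S) * ν.real (cylinder n fun i => a (i + 1)) := ih _
      _ ≤ (lamν / lamμ) ^ n * exp (2 * S) *
          (lamν * (g0 * exp (W + T)) * ν.real (cylinder (n + 1) a)) := by gcongr
      _ = lamμ * (g0 * exp (W - T)) * ((lamν / lamμ) ^ (n + 1) *
          exp (2 * ∑ m ∈ Finset.range (n + 1), tailSum g (m + 1)) *
            ν.real (cylinder (n + 1) a)) := by
        have hexp : exp (2 * S) * exp (W + T) = exp (W - T) * exp (2 * (S + T)) := by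
          rw [← exp_add, ← exp_add]
          ring_nf
        rw [Finset.sum_range_succ, pow_succ]
        field_simp
        linear_combination (lamν * (lamν / lamμ) ^ n * ν.real (cylinder (n + 1) a)) * hexp

lemma measure_cylinder_le [Nonempty A] (hg : ∀ k a, 0 < g k a) (hg0 : 0 < g0)
    {μ ν : Measure (ℕ → A)} [IsProbabilityMeasure μ] [IsProbabilityMeasure ν] {lamμ lamν : ℝ}
    (hlamμ : 0 < lamμ) (hlamν : 0 ≤ lamν)
    (hμ : IsConformalFor (productPotential g g0) lamμ μ)
    (hν : IsConformalFor (productPotential g g0) lamν ν) (n : ℕ) (a : ℕ → A) :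
    μ (cylinder n a) ≤
      ENNReal.ofReal ((lamν / lamμ) ^ n * exp (2 * ∑' m, tailSum g m)) * ν (cylinder n a) := by
  rw [← ofReal_measureReal, ← ofReal_measureReal, ← ENNReal.ofReal_mul (by positivity)]
  refine ENNReal.ofReal_le_ofReal
    ((hsum.measureReal_cylinder_le hg hg0 hlamμ hlamν hμ hν n a).trans ?_)
  gcongr
  exact hsum.sum_range_tailSum_succ_le_tsum hg n

lemma conformalParam_le [Nonempty A] (hg : ∀ k a, 0 < g k a) (hg0 : 0 < g0)
    {μ ν : Measure (ℕ → A)} [IsProbabilityMeasure μ] [IsProbabilityMeasure ν] {lamμ lamν : ℝ}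
    (hlamμ : 0 < lamμ) (hlamν : 0 ≤ lamν)
    (hμ : IsConformalFor (productPotential g g0) lamμ μ)
    (hν : IsConformalFor (productPotential g g0) lamν ν) : lamμ ≤ lamν := by
  by_contra! hlt
  set C := exp (2 * ∑' m, tailSum g m)
  have hr : lamν / lamμ < 1 := (div_lt_one hlamμ).2 hlt
  -- sum the cylinder bound over all cylinders of length `n`
  have hbound : ∀ n, 1 ≤ (lamν / lamμ) ^ n * C := fun n => by
    simpa using measure_preimage_initialWord_le
      (hsum.measure_cylinder_le hg hg0 hlamμ hlamν hμ hν n) univ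
  have hlim : Tendsto (fun n => (lamν / lamμ) ^ n * C) atTop (𝓝 0) := by
    simpa using (tendsto_pow_atTop_nhds_zero_of_lt_one (by positivity) hr).mul_const C
  obtain ⟨n, hn⟩ := (hlim.eventually_lt_const one_pos).exists
  exact (hbound n).not_gt hn

lemma measure_cylinder_le_ofReal_tprod [Nonempty A] (hg : ∀ k a, 0 < g k a) (hg0 : 0 < g0)
    {μ ν : Measure (ℕ → A)} [IsProbabilityMeasure μ] [IsProbabilityMeasure ν] {lamμ lamν : ℝ}
    (hlamμ : 0 < lamμ) (hlamν : 0 < lamν)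
    (hμ : IsConformalFor (productPotential g g0) lamμ μ)
    (hν : IsConformalFor (productPotential g g0) lamν ν) (n : ℕ) (a : ℕ → A) :
    μ (cylinder n a) ≤
      ENNReal.ofReal (∏' i, ∏' j, maxSupNorm g (i + j) ^ 2) * ν (cylinder n a) := by
  have hlam : lamμ = lamν := (hsum.conformalParam_le hg hg0 hlamμ hlamν.le hμ hν).antisymm
    (hsum.conformalParam_le hg hg0 hlamν hlamμ.le hν hμ)
  simpa [hlam, hlamν.ne', hsum.tprod_tprod_maxSupNorm_sq hg] using
    hsum.measure_cylinder_le hg hg0 hlamμ hlamν.le hμ hν n a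

end DoublySummable

end Conformal

end ProductPotential

/-- Under the double summability condition, any two conformal probability
measures `μ`, `ν` for the product-type potential `g = g0 ∏ g_i` satisfy
`K⁻¹ ≤ μ([a_1,…,a_n])/ν([a_1,…,a_n]) ≤ K` on all cylinders, where `K = ∏_i K_i` and
`K_i = ∏_{k≥i} max{‖g_k‖_∞², ‖g_k⁻¹‖_∞²}`; in particular `μ` and `ν` are equivalent. -/
theorem stmt_8 {A : Type*} [Fintype A] [Nonempty A] [MeasurableSpace A]
    [MeasurableSingletonClass A]
    (g0 : ℝ) (hg0 : 0 < g0) (g : ℕ → A → ℝ) (hg : ∀ (k : ℕ) (a : A), 0 < g k a)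
    (hsum : Summable fun p : ℕ × ℕ =>
      Real.log (⨆ a : A, max (g (p.1 + p.2) a) (g (p.1 + p.2) a)⁻¹))
    (μ ν : Measure (ℕ → A)) (hμp : IsProbabilityMeasure μ) (hνp : IsProbabilityMeasure ν)
    (lamμ lamν : ℝ) (hlamμ : 0 < lamμ) (hlamν : 0 < lamν)
    (hμ : IsConformalFor (fun x => g0 * ∏' i : ℕ, g i (x i)) lamμ μ)
    (hν : IsConformalFor (fun x => g0 * ∏' i : ℕ, g i (x i)) lamν ν) :
    (∀ (n : ℕ) (a : ℕ → A),
      μ {x : ℕ → A | ∀ i < n, x i = a i} ≤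
          ENNReal.ofReal (∏' i : ℕ, ∏' j : ℕ,
              (⨆ b : A, max (g (i + j) b) (g (i + j) b)⁻¹) ^ 2) *
            ν {x : ℕ → A | ∀ i < n, x i = a i} ∧
      ν {x : ℕ → A | ∀ i < n, x i = a i} ≤
          ENNReal.ofReal (∏' i : ℕ, ∏' j : ℕ,
              (⨆ b : A, max (g (i + j) b) (g (i + j) b)⁻¹) ^ 2) *
            μ {x : ℕ → A | ∀ i < n, x i = a i}) ∧
    μ ≪ ν ∧ ν ≪ μ := by
  have hsum : ProductPotential.DoublySummable g := hsum
  have hμν := hsum.measure_cylinder_le_ofReal_tprod hg hg0 hlamμ hlamν hμ hν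
  have hνμ := hsum.measure_cylinder_le_ofReal_tprod hg hg0 hlamν hlamμ hν hμ
  exact ⟨fun n a => ⟨hμν n a, hνμ n a⟩,
    Measure.absolutelyContinuous_of_le_smul
      (ProductPotential.le_smul_of_forall_cylinder_le ENNReal.ofReal_ne_top hμν),
    Measure.absolutelyContinuous_of_le_smul
      (ProductPotential.le_smul_of_forall_cylinder_le ENNReal.ofReal_ne_top hνμ)⟩
end

section
/- Any conformal measure ν which is positive on open sets, for a potential g of product type on finite alphabet A^ℕ, is ergodic: if A is a Borel set with T^{−1}(A) = A then ν(A) ∈ {0, 1}, given that any two such conformal measures are equivalent. -/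
open MeasureTheory

/-!
If `s` is shift-invariant with `0 < ν s < 1`, then `ν[|s]` and `ν[|sᶜ]` are again conformal
probability measures, because the shift maps `C ∩ s` onto `T C ∩ s`. They are positive on open
sets: from `ν (cylinder x (n + 1) ∩ s) = 0` conformality gives `ν (cylinder (T x) n ∩ s) = 0`,
and after `n + 1` steps `ν s = 0`. So they would be equivalent, yet they are mutually singular.
-/

open Set PiNat ProbabilityTheory

section

variable {A : Type*}

theorem PiNat.exists_cylinder_subset_of_isOpen [TopologicalSpace A] {U : Set (ℕ → A)}
    (hU : IsOpen U) {x : ℕ → A} (hx : x ∈ U) : ∃ n, cylinder x n ⊆ U := by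
  obtain ⟨I, u, hu, hIu⟩ := isOpen_pi_iff.mp hU x hx
  refine ⟨I.sup id + 1, fun y hy => hIu fun i hi => ?_⟩
  rw [hy i (Nat.lt_succ_of_le (Finset.le_sup (f := id) hi))]
  exact (hu i hi).2

theorem PiNat.measurableSet_cylinder [MeasurableSpace A] [MeasurableSingletonClass A]
    (x : ℕ → A) (n : ℕ) : MeasurableSet (cylinder x n) := by
  rw [cylinder_eq_pi]
  exact .pi (Finset.range n).countable_toSet fun i _ => measurableSet_singleton (x i)

namespace shiftMap

theorem injOn_cylinder_succ (x : ℕ → A) (n : ℕ) :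
    InjOn (shiftMap A) (cylinder x (n + 1)) := by
  intro y hy z hz hyz
  funext i
  cases i with
  | zero => exact (hy 0 n.succ_pos).trans (hz 0 n.succ_pos).symm
  | succ k => exact congrFun hyz k

theorem image_cylinder_succ (x : ℕ → A) (n : ℕ) :
    shiftMap A '' cylinder x (n + 1) = cylinder (shiftMap A x) n := by
  ext y
  constructor
  · rintro ⟨z, hz, rfl⟩ i hi
    exact hz (i + 1) (Nat.succ_lt_succ hi)
  · intro hy
    refine ⟨fun i => Nat.casesOn i (x 0) y, ?_, rfl⟩
    rintro (_ | i) hi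
    · rfl
    · exact hy i (Nat.lt_of_succ_lt_succ hi)

theorem image_inter_of_preimage_eq {s : Set (ℕ → A)} (hs : shiftMap A ⁻¹' s = s)
    (C : Set (ℕ → A)) : shiftMap A '' (C ∩ s) = shiftMap A '' C ∩ s := by
  conv_lhs => rw [← hs]
  exact image_inter_preimage _ _ _

end shiftMap

namespace IsConformalFor

variable [MeasurableSpace A] {G : (ℕ → A) → ℝ} {lam : ℝ} {ν : Measure (ℕ → A)}
  {s : Set (ℕ → A)}

theorem measure_eq_zero_of_measure_cylinder_inter_eq_zero [MeasurableSingletonClass A]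
    (hν : IsConformalFor G lam ν) (hs : MeasurableSet s) (hinv : shiftMap A ⁻¹' s = s)
    (n : ℕ) (x : ℕ → A) (hx : ν (cylinder x n ∩ s) = 0) : ν s = 0 := by
  induction n generalizing x with
  | zero => rwa [cylinder_zero, univ_inter] at hx
  | succ n ih =>
    have hconf := hν _ ((measurableSet_cylinder x (n + 1)).inter hs)
      ((shiftMap.injOn_cylinder_succ x n).mono inter_subset_left)
    rw [shiftMap.image_inter_of_preimage_eq hinv, shiftMap.image_cylinder_succ,
      setIntegral_measure_zero _ hx, mul_zero, ENNReal.ofReal_zero] at hconf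
    exact ih (shiftMap A x) hconf

theorem cond_pos_of_isOpen [MeasurableSingletonClass A] [TopologicalSpace A]
    [IsFiniteMeasure ν] (hν : IsConformalFor G lam ν) (hs : MeasurableSet s)
    (hinv : shiftMap A ⁻¹' s = s) (h0 : ν s ≠ 0) {U : Set (ℕ → A)} (hU : IsOpen U)
    (hU₀ : U.Nonempty) : 0 < ν[|s] U := by
  obtain ⟨x, hx⟩ := hU₀
  obtain ⟨n, hn⟩ := exists_cylinder_subset_of_isOpen hU hx
  have hsU : ν (s ∩ U) ≠ 0 := fun hsU =>
    h0 (hν.measure_eq_zero_of_measure_cylinder_inter_eq_zero hs hinv n x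
      (measure_mono_null (fun _ hy => ⟨hy.2, hn hy.1⟩ : cylinder x n ∩ s ⊆ s ∩ U) hsU))
  rw [cond_apply hs]
  exact pos_iff_ne_zero.mpr (mul_ne_zero (ENNReal.inv_ne_zero.mpr (measure_ne_top ν s)) hsU)

theorem cond (hν : IsConformalFor G lam ν) (hs : MeasurableSet s)
    (hinv : shiftMap A ⁻¹' s = s) (h0 : ν s ≠ 0) : IsConformalFor G lam ν[|s] := by
  intro C hC hinj
  have hint : ∫ x in C, G x ∂ν[|s] = ((ν s)⁻¹).toReal * ∫ x in C ∩ s, G x ∂ν := by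
    rw [ProbabilityTheory.cond, Measure.restrict_smul, integral_smul_measure,
      Measure.restrict_restrict hC, smul_eq_mul]
  rw [cond_apply hs, inter_comm, ← shiftMap.image_inter_of_preimage_eq hinv,
    hν _ (hC.inter hs) (hinj.mono inter_subset_left), hint, mul_left_comm,
    ENNReal.ofReal_mul ENNReal.toReal_nonneg, ENNReal.ofReal_toReal (ENNReal.inv_ne_top.mpr h0)]

end IsConformalFor

end

theorem stmt_9_general {A : Type*} [MeasurableSpace A]
    [MeasurableSingletonClass A] [TopologicalSpace A]
    (g0 : ℝ) (g : ℕ → A → ℝ)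
    (heqv : ∀ (ν₁ ν₂ : Measure (ℕ → A)) (lam₁ lam₂ : ℝ),
      IsProbabilityMeasure ν₁ → IsProbabilityMeasure ν₂ → 0 < lam₁ → 0 < lam₂ →
      IsConformalFor (fun x => g0 * ∏' i : ℕ, g i (x i)) lam₁ ν₁ →
      IsConformalFor (fun x => g0 * ∏' i : ℕ, g i (x i)) lam₂ ν₂ →
      (∀ U : Set (ℕ → A), IsOpen U → U.Nonempty → 0 < ν₁ U) →
      (∀ U : Set (ℕ → A), IsOpen U → U.Nonempty → 0 < ν₂ U) →
      ν₁ ≪ ν₂)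
    (ν : Measure (ℕ → A)) (hνp : IsProbabilityMeasure ν)
    (lam : ℝ) (hlam : 0 < lam)
    (hν : IsConformalFor (fun x => g0 * ∏' i : ℕ, g i (x i)) lam ν) :
    ∀ s : Set (ℕ → A), MeasurableSet s → shiftMap A ⁻¹' s = s →
      ν s = 0 ∨ ν s = 1 := by
  intro s hs hinv
  by_contra! h
  obtain ⟨h0, h1⟩ := h
  have hcinv : shiftMap A ⁻¹' sᶜ = sᶜ := by rw [preimage_compl, hinv]
  have hc0 : ν sᶜ ≠ 0 := fun h => h1 ((prob_compl_eq_zero_iff hs).mp h)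
  have hac : ν[|s] ≪ ν[|sᶜ] :=
    heqv _ _ lam lam (cond_isProbabilityMeasure h0) (cond_isProbabilityMeasure hc0) hlam hlam
      (hν.cond hs hinv h0) (hν.cond hs.compl hcinv hc0)
      (fun _ => hν.cond_pos_of_isOpen hs hinv h0)
      (fun _ => hν.cond_pos_of_isOpen hs.compl hcinv hc0)
  have hsingular : ν[|sᶜ] s = 0 := by
    rw [cond_apply hs.compl, compl_inter_self, measure_empty, mul_zero]
  exact one_ne_zero ((cond_apply_self h0 (measure_ne_top ν s)).symm.trans (hac hsingular))

/-- Any conformal probability measure `ν`, positive on open sets, for a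
potential `g` of product type on a finite alphabet, is ergodic (invariant Borel sets have
measure `0` or `1`), given that any two such conformal measures are equivalent. -/
theorem stmt_9 {A : Type*} [Fintype A] [Nonempty A] [MeasurableSpace A]
    [MeasurableSingletonClass A] [TopologicalSpace A] [DiscreteTopology A]
    (g0 : ℝ) (hg0 : 0 < g0) (g : ℕ → A → ℝ) (hg : ∀ (k : ℕ) (a : A), 0 < g k a)
    (heqv : ∀ (ν₁ ν₂ : Measure (ℕ → A)) (lam₁ lam₂ : ℝ),
      IsProbabilityMeasure ν₁ → IsProbabilityMeasure ν₂ → 0 < lam₁ → 0 < lam₂ →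
      IsConformalFor (fun x => g0 * ∏' i : ℕ, g i (x i)) lam₁ ν₁ →
      IsConformalFor (fun x => g0 * ∏' i : ℕ, g i (x i)) lam₂ ν₂ →
      (∀ U : Set (ℕ → A), IsOpen U → U.Nonempty → 0 < ν₁ U) →
      (∀ U : Set (ℕ → A), IsOpen U → U.Nonempty → 0 < ν₂ U) →
      ν₁ ≪ ν₂)
    (ν : Measure (ℕ → A)) (hνp : IsProbabilityMeasure ν)
    (lam : ℝ) (hlam : 0 < lam)
    (hν : IsConformalFor (fun x => g0 * ∏' i : ℕ, g i (x i)) lam ν)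
    (hpos : ∀ U : Set (ℕ → A), IsOpen U → U.Nonempty → 0 < ν U) :
    ∀ s : Set (ℕ → A), MeasurableSet s → shiftMap A ⁻¹' s = s →
      ν s = 0 ∨ ν s = 1 :=
  stmt_9_general g0 g heqv ν hνp lam hlam hν
end

section
/- Let g be a summable, ℓ1-bounded potential of product type on A^ℕ with A finite. Then the topological pressure P(log g) = lim_n (1/n) log Σ_{w∈A^n} sup_{x∈[w]} Π_{i=0}^{n−1} g(T^i x) equals log λ, where λ = g_0 Σ_{a∈A} Π_{i=1}^∞ g_i(a). -/
/-!
Write `log g (Tʲ x) = log g₀ + ∑ᵢ log gᵢ (x (i + j))` and regroup the Birkhoff sum over `j < n`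
by coordinate: coordinate `m < n` collects `∑_{i ≤ m} log gᵢ (x m)`, which only depends on the
word of the cylinder, while the coordinates `≥ n` contribute at most
`Eₙ = ∑_{d < n} ∑ᵢ v (i + d)`. Up to a factor `exp (± Eₙ)` the sum over cylinders therefore
factorises as `∏_{m < n} g₀ Zₘ` with `Zₘ = ∑ₐ ∏_{i ≤ m} gᵢ a → λ / g₀`, and `Eₙ = o(n)` since the
tails of `v` tend to `0`; both limits are Cesàro averages.
-/

open Real Filter Finset Topology

theorem sum_range_sum_range_sub {M : Type*} [AddCommMonoid M] (h : ℕ → ℕ → M) (n : ℕ) :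
    ∑ j ∈ range n, ∑ i ∈ range (n - j), h i (i + j)
      = ∑ m ∈ range n, ∑ i ∈ range (m + 1), h i m := by
  rw [sum_sigma', sum_sigma']
  refine sum_nbij' (fun p => ⟨p.2 + p.1, p.2⟩) (fun p => ⟨p.1 - p.2, p.2⟩) ?_ ?_ ?_ ?_ ?_ <;>
    rintro ⟨a, b⟩ hab <;> simp_all <;> omega

theorem abs_log_sub_log_le_iff {p q E : ℝ} (hp : 0 < p) (hq : 0 < q) :
    |log p - log q| ≤ E ↔ exp (-E) * q ≤ p ∧ p ≤ exp E * q := by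
  have h₁ : exp (-E) * q ≤ p ↔ -E + log q ≤ log p := by
    rw [le_log_iff_exp_le hp, exp_add, exp_log hq]
  have h₂ : p ≤ exp E * q ↔ log p ≤ E + log q := by
    rw [log_le_iff_le_exp hp, exp_add, exp_log hq]
  rw [h₁, h₂, abs_le]
  constructor <;> rintro ⟨_, _⟩ <;> constructor <;> linarith

theorem summable_of_abs_succ_le {f v : ℕ → ℝ} (hv : Summable v) (hf : ∀ k, |f (k + 1)| ≤ v k) :
    Summable f :=
  (summable_nat_add_iff 1).mp (hv.of_norm_bounded hf)

theorem hasProd_exp_tsum_log_of_abs_log_succ_le {f v : ℕ → ℝ} (hf : ∀ k, 0 < f k)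
    (hv : Summable v) (h : ∀ k, |log (f (k + 1))| ≤ v k) :
    HasProd f (exp (∑' k, log (f k))) :=
  hasProd_of_hasSum_log hf (summable_of_abs_succ_le hv h).hasSum

theorem abs_sum_tsum_sub_sum_sum_le {f : ℕ → ℕ → ℝ} {v : ℕ → ℝ} (hv : Summable v)
    (hf : ∀ k m, |f (k + 1) m| ≤ v k) (n : ℕ) :
    |∑ j ∈ range n, ∑' i, f i (i + j) - ∑ m ∈ range n, ∑ i ∈ range (m + 1), f i m|
      ≤ ∑ d ∈ range n, ∑' i, v (i + d) := by
  have hsplit : ∀ j, ∑' i, f i (i + j)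
      = ∑ i ∈ range (n - j), f i (i + j) + ∑' i, f (i + (n - j)) (i + (n - j) + j) := fun j =>
    ((summable_of_abs_succ_le hv fun k => hf k _).sum_add_tsum_nat_add _).symm
  have htail : ∀ j ∈ range n, |∑' i, f (i + (n - j)) (i + (n - j) + j)|
      ≤ ∑' i, v (i + (n - 1 - j)) := by
    intro j hj
    rw [← Real.norm_eq_abs]
    refine tsum_of_norm_bounded ((summable_nat_add_iff (f := v) _).mpr hv).hasSum fun i => ?_
    rw [show i + (n - j) = i + (n - 1 - j) + 1 by grind]
    exact hf _ _
  calc _ = |∑ j ∈ range n, ∑' i, f (i + (n - j)) (i + (n - j) + j)| := by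
        simp_rw [hsplit, sum_add_distrib, sum_range_sum_range_sub, add_sub_cancel_left]
    _ ≤ ∑ j ∈ range n, ∑' i, v (i + (n - 1 - j)) :=
        (abs_sum_le_sum_abs _ _).trans (sum_le_sum htail)
    _ = ∑ d ∈ range n, ∑' i, v (i + d) := sum_range_reflect (fun d => ∑' i, v (i + d)) n

theorem abs_log_sum_ciSup_sub_log_sum_le {ι : Type*} [Fintype ι] [Nonempty ι] {X : ι → Type*}
    [∀ w, Nonempty (X w)] {F : ∀ w, X w → ℝ} {a : ι → ℝ} {E : ℝ}
    (hF : ∀ w x, 0 < F w x) (ha : ∀ w, 0 < a w) (h : ∀ w x, |log (F w x) - log (a w)| ≤ E) :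
    |log (∑ w, ⨆ x, F w x) - log (∑ w, a w)| ≤ E := by
  have hbound w x := (abs_log_sub_log_le_iff (hF w x) (ha w)).mp (h w x)
  have hsup : ∀ w, exp (-E) * a w ≤ ⨆ x, F w x ∧ ⨆ x, F w x ≤ exp E * a w := fun w =>
    ⟨le_ciSup_of_le ⟨_, Set.forall_mem_range.mpr fun x => (hbound w x).2⟩
      (Classical.arbitrary _) (hbound w _).1, ciSup_le fun x => (hbound w x).2⟩
  have hpos : 0 < ∑ w, a w := sum_pos (fun w _ => ha w) univ_nonempty
  refine (abs_log_sub_log_le_iff ?_ hpos).mpr ⟨?_, ?_⟩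
  · exact sum_pos (fun w _ => (mul_pos (exp_pos _) (ha w)).trans_le (hsup w).1) univ_nonempty
  · rw [mul_sum]; exact sum_le_sum fun w _ => (hsup w).1
  · rw [mul_sum]; exact sum_le_sum fun w _ => (hsup w).2

theorem abs_log_prod_tprod_sub_log_prod_prod_le {A : Type*} {g0 : ℝ} (hg0 : 0 < g0)
    {g : ℕ → A → ℝ} (hg : ∀ k a, 0 < g k a) {v : ℕ → ℝ}
    (hv : ∀ k a, |log (g (k + 1) a)| ≤ v k) (hl1 : Summable v) (x : ℕ → A) (n : ℕ) :
    |log (∏ j ∈ range n, (g0 * ∏' i, g i (x (i + j))))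
        - log (∏ m ∈ range n, (g0 * ∏ i ∈ range (m + 1), g i (x m)))|
      ≤ ∑ d ∈ range n, ∑' i, v (i + d) := by
  have htprod j : ∏' i, g i (x (i + j)) = exp (∑' i, log (g i (x (i + j)))) :=
    (hasProd_exp_tsum_log_of_abs_log_succ_le (fun i => hg i _) hl1 fun k => hv k _).tprod_eq
  have hprod m : 0 < ∏ i ∈ range (m + 1), g i (x m) := prod_pos fun i _ => hg i _
  rw [log_prod fun j _ => by rw [htprod]; positivity,
    log_prod fun m _ => (mul_pos hg0 (hprod m)).ne']
  simp_rw [htprod, log_mul hg0.ne' (exp_pos _).ne', log_mul hg0.ne' (hprod _).ne', log_exp,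
    log_prod fun i _ => (hg i _).ne', sum_add_distrib, add_sub_add_left_eq_sub]
  exact abs_sum_tsum_sub_sum_sum_le (f := fun i m => log (g i (x m))) hl1 (fun k m => hv k (x m)) n

instance {A : Type*} [Nonempty A] (n : ℕ) (w : Fin n → A) :
    Nonempty {x : ℕ → A // ∀ i : Fin n, x i = w i} :=
  ⟨⟨fun m => if h : m < n then w ⟨m, h⟩ else Classical.arbitrary A, fun i => by simp⟩⟩

theorem abs_log_sum_ciSup_prod_tprod_sub_le {A : Type*} [Fintype A] [Nonempty A] {g0 : ℝ}
    (hg0 : 0 < g0) {g : ℕ → A → ℝ} (hg : ∀ k a, 0 < g k a) {v : ℕ → ℝ}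
    (hv : ∀ k a, |log (g (k + 1) a)| ≤ v k) (hl1 : Summable v) (n : ℕ) :
    |log (∑ w : Fin n → A, ⨆ x : {x : ℕ → A // ∀ i : Fin n, x i = w i},
          ∏ j ∈ range n, (g0 * ∏' i, g i (x.1 (i + j))))
        - ∑ m ∈ range n, log (g0 * ∑ a, ∏ i ∈ range (m + 1), g i a)|
      ≤ ∑ d ∈ range n, ∑' i, v (i + d) := by
  set G : ℕ → A → ℝ := fun m a => g0 * ∏ i ∈ range (m + 1), g i a
  have hG m a : 0 < G m a := mul_pos hg0 (prod_pos fun i _ => hg i a)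
  have hwords : ∑ m ∈ range n, log (g0 * ∑ a, ∏ i ∈ range (m + 1), g i a)
      = log (∑ w : Fin n → A, ∏ m : Fin n, G m (w m)) := by
    rw [← Fintype.prod_sum, Fin.prod_univ_eq_prod_range (fun m => ∑ a, G m a),
      log_prod fun m _ => (sum_pos (fun a _ => hG m a) univ_nonempty).ne']
    simp only [G, mul_sum]
  have hcyl (w : Fin n → A) (x : {x : ℕ → A // ∀ i : Fin n, x i = w i}) :
      ∏ m ∈ range n, G m (x.1 m) = ∏ m : Fin n, G m (w m) := by
    rw [← Fin.prod_univ_eq_prod_range]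
    simp only [x.2]
  rw [hwords]
  refine abs_log_sum_ciSup_sub_log_sum_le (fun w x => ?_) (fun w => prod_pos fun m _ => hG m _)
    fun w x => hcyl w x ▸ abs_log_prod_tprod_sub_log_prod_prod_le hg0 hg hv hl1 x.1 n
  refine prod_pos fun j _ => mul_pos hg0 ?_
  rw [(hasProd_exp_tsum_log_of_abs_log_succ_le (fun i => hg i (x.1 (i + j))) hl1
    fun k => hv k _).tprod_eq]
  exact exp_pos _

theorem tendsto_div_of_abs_sub_le {a b e : ℕ → ℝ} {L : ℝ} (h : ∀ n, |a n - b n| ≤ e n)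
    (hb : Tendsto (fun n => b n / n) atTop (𝓝 L)) (he : Tendsto (fun n => e n / n) atTop (𝓝 0)) :
    Tendsto (fun n => a n / n) atTop (𝓝 L) := by
  have hdiff : Tendsto (fun n => a n / n - b n / n) atTop (𝓝 0) :=
    squeeze_zero_norm (fun n => by
      rw [Real.norm_eq_abs, ← sub_div, abs_div, Nat.abs_cast]
      exact div_le_div_of_nonneg_right (h n) n.cast_nonneg) he
  simpa using hdiff.add hb

theorem tendsto_log_mul_sum_prod_range {A : Type*} [Fintype A] [Nonempty A] {g0 : ℝ}
    (hg0 : 0 < g0) {g : ℕ → A → ℝ} (hg : ∀ k a, 0 < g k a) {v : ℕ → ℝ}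
    (hv : ∀ k a, |log (g (k + 1) a)| ≤ v k) (hl1 : Summable v) :
    Tendsto (fun m => log (g0 * ∑ a, ∏ i ∈ range (m + 1), g i a)) atTop
      (𝓝 (log (g0 * ∑ a, ∏' k, g k a))) := by
  have hprod a := hasProd_exp_tsum_log_of_abs_log_succ_le (hg · a) hl1 fun k => hv k a
  have hlim : Tendsto (fun m => ∑ a, ∏ i ∈ range (m + 1), g i a) atTop (𝓝 (∑ a, ∏' k, g k a)) :=
    tendsto_finsetSum _ fun a _ =>
      (hprod a).multipliable.hasProd.tendsto_prod_nat.comp (tendsto_add_atTop_nat 1)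
  refine (hlim.const_mul g0).log (mul_pos hg0 (sum_pos (fun a _ => ?_) univ_nonempty)).ne'
  exact (hprod a).tprod_eq ▸ exp_pos _

/-- For a summable, ℓ1-bounded potential of product type
`g(x) = g0 ∏_k g_k(x_k)` on a finite alphabet, the topological pressure
`P(log g) = lim_n (1/n) log ∑_{w ∈ A^n} sup_{x ∈ [w]} ∏_{i<n} g(T^i x)` equals
`log λ` with `λ = g0 ∑_a ∏_i g_i(a)`. -/
theorem stmt_14 {A : Type*} [Fintype A] [Nonempty A]
    (g0 : ℝ) (hg0 : 0 < g0) (g : ℕ → A → ℝ) (hg : ∀ (k : ℕ) (a : A), 0 < g k a)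
    (v : ℕ → ℝ) (hv : ∀ (k : ℕ) (a : A), |Real.log (g (k + 1) a)| ≤ v k)
    (hl1 : Summable v) :
    Filter.Tendsto (fun n : ℕ =>
        Real.log (∑ w : Fin n → A,
          ⨆ x : {x : ℕ → A // ∀ i : Fin n, x i = w i},
            ∏ j ∈ Finset.range n, (g0 * ∏' i : ℕ, g i (x.1 (i + j)))) / (n : ℝ))
      Filter.atTop (nhds (Real.log (g0 * ∑ a : A, ∏' k : ℕ, g k a))) :=
  tendsto_div_of_abs_sub_le (abs_log_sum_ciSup_prod_tprod_sub_le hg0 hg hv hl1)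
    (by simpa only [inv_mul_eq_div] using (tendsto_log_mul_sum_prod_range hg0 hg hv hl1).cesaro)
    (by simpa only [inv_mul_eq_div] using (tendsto_sum_nat_add v).cesaro)
end

section
/- Let A be finite, μ the conformal product measure for a summable, ℓ1-bounded potential g of product type, and λ the conformality parameter. Then there is at most one h ∈ L^1(X,μ) with L_{log g}(h) = λ h and ∫ h dμ = 1. (The proof uses that λ^{−1} L_{log g} is the transfer operator of T with respect to μ, that T is exact since μ is a product measure via Kolmogorov's 0-1 law, and Lin's criterion: ‖λ^{−n} L^n(φ)‖_1 → 0 whenever ∫ φ dμ = 0.) -/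
/-!
Write `L φ (x) = ∑ₐ φ (a x) g (a x)` and put `φ = h₁ - h₂`, so that `L φ = λ φ` and `∫ φ = 0`.
Testing the duality `∫ L φ = λ ∫ φ` against indicators shows that the shift `T` and the
branches `x ↦ a x` are non-singular. Since `|L φ| ≤ L |φ|` and both sides have integral
`λ ∫ |φ|`, equality holds a.e., so every term `φ (a x) g (a x)` has the sign of `φ x`; hence
`φ y > 0` forces `φ (Tⁿ y) > 0` for all `n`. The points whose orbit eventually stays in `{φ > 0}`
form a shift-invariant set, which by Kolmogorov's 0-1 law for the product measure `μ` is null or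
conull; the same holds for `{φ < 0}`, and the two sets are disjoint. So `φ` has a.e. constant
sign, and `∫ φ = 0` gives `φ = 0` a.e.
-/

open MeasureTheory

/-- Prepend a symbol to a sequence: `cons a x = (a, x_0, x_1, …)`. -/
def consSeq {A : Type*} (a : A) (x : ℕ → A) : ℕ → A
  | 0 => a
  | n + 1 => x n

open Filter ProbabilityTheory Finset Real

lemma sum_pos_of_abs_sum_eq_sum_abs {ι : Type*} {s : Finset ι} {f : ι → ℝ}
    (h : |∑ i ∈ s, f i| = ∑ i ∈ s, |f i|) {i : ι} (hi : i ∈ s) (hfi : 0 < f i) :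
    0 < ∑ i ∈ s, f i := by
  by_contra! hle
  have hzero : ∑ j ∈ s, (|f j| + f j) = 0 := by
    rw [sum_add_distrib, ← h, abs_of_nonpos hle, neg_add_cancel]
  have := (sum_eq_zero_iff_of_nonneg fun j _ => neg_le_iff_add_nonneg'.1 (neg_abs_le (f j))).1
    hzero i hi
  linarith [abs_nonneg (f i)]

lemma MeasureTheory.Measure.QuasiMeasurePreserving.ae_forall_iterate_mem {α : Type*}
    [MeasurableSpace α] {μ : Measure α} {T : α → α} (hT : Measure.QuasiMeasurePreserving T μ μ)
    {P : Set α} (h : ∀ᵐ x ∂μ, x ∈ P → T x ∈ P) : ∀ᵐ x ∂μ, x ∈ P → ∀ n, T^[n] x ∈ P := by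
  have hstep (n : ℕ) : ∀ᵐ x ∂μ, T^[n] x ∈ P → T^[n + 1] x ∈ P := by
    simpa only [Function.iterate_succ_apply'] using (hT.iterate n).ae h
  filter_upwards [ae_all_iff.2 hstep] with x hx hP n
  induction n with
  | zero => exact hP
  | succ n ih => exact hx n ih

lemma preimage_liminf_preimage_iterate {α : Type*} (T : α → α) (P : Set α) :
    T ⁻¹' liminf (fun n => T^[n] ⁻¹' P) atTop = liminf (fun n => T^[n] ⁻¹' P) atTop := by
  ext x
  simp only [Set.mem_preimage, mem_liminf_iff_eventually_mem, ← Function.iterate_succ_apply]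
  simpa only [tendsto_principal] using
    tendsto_add_atTop_iff_nat (f := fun n => T^[n] x) (l := 𝓟 P) 1

lemma measure_eq_zero_or_of_disjoint {α : Type*} [MeasurableSpace α] {μ : Measure α}
    [IsProbabilityMeasure μ] {s t : Set α} (hst : Disjoint s t) (ht : MeasurableSet t)
    (hs : μ s = 0 ∨ μ s = 1) (ht01 : μ t = 0 ∨ μ t = 1) : μ s = 0 ∨ μ t = 0 := by
  refine hs.imp_right fun hs1 => ht01.resolve_right fun ht1 => ?_
  have h := measure_union hst ht (μ := μ)
  rw [hs1, ht1] at h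
  exact absurd (h ▸ prob_le_one) (by norm_num)

section TransferOperator

variable {X A : Type*} [Fintype A]

def transferOp (σ : A → X → X) (w : A → X → ℝ) (φ : X → ℝ) (x : X) : ℝ :=
  ∑ a, φ (σ a x) * w a x

variable {σ : A → X → X} {w : A → X → ℝ}

lemma transferOp_sub (φ ψ : X → ℝ) (x : X) :
    transferOp σ w (φ - ψ) x = transferOp σ w φ x - transferOp σ w ψ x := by
  simp only [transferOp, Pi.sub_apply, sub_mul, sum_sub_distrib]

lemma transferOp_neg (φ : X → ℝ) (x : X) : transferOp σ w (-φ) x = -transferOp σ w φ x := by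
  simp only [transferOp, Pi.neg_apply, neg_mul, sum_neg_distrib]

lemma transferOp_mono (hw : ∀ a x, 0 ≤ w a x) {φ ψ : X → ℝ} (h : φ ≤ ψ) (x : X) :
    transferOp σ w φ x ≤ transferOp σ w ψ x :=
  sum_le_sum fun a _ => mul_le_mul_of_nonneg_right (h _) (hw a x)

lemma transferOp_nonneg (hw : ∀ a x, 0 ≤ w a x) {φ : X → ℝ} (hφ : 0 ≤ φ) (x : X) :
    0 ≤ transferOp σ w φ x :=
  sum_nonneg fun a _ => mul_nonneg (hφ _) (hw a x)

lemma abs_transferOp_le (hw : ∀ a x, 0 ≤ w a x) (φ : X → ℝ) (x : X) :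
    |transferOp σ w φ x| ≤ transferOp σ w (fun y => |φ y|) x := by
  refine (abs_sum_le_sum_abs _ _).trans_eq (sum_congr rfl fun a _ => ?_)
  rw [abs_mul, abs_of_nonneg (hw a x)]

lemma iSup_ofReal_transferOp_min (hw : ∀ a x, 0 ≤ w a x) {φ : X → ℝ} (x : X) :
    ⨆ n : ℕ, ENNReal.ofReal (transferOp σ w (fun y => min (φ y) n) x) =
      ENNReal.ofReal (transferOp σ w φ x) := by
  refine le_antisymm (iSup_le fun n => ENNReal.ofReal_le_ofReal <|
    transferOp_mono hw (fun y => min_le_left _ _) x) ?_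
  obtain ⟨N, hN⟩ := exists_nat_ge (∑ a, |φ (σ a x)|)
  refine le_iSup_of_le N (le_of_eq <| congrArg _ <| sum_congr rfl fun a _ => ?_)
  dsimp only
  rw [min_eq_left ((le_abs_self _).trans <|
    (single_le_sum (fun b _ => abs_nonneg (φ (σ b x))) (mem_univ a)).trans hN)]

variable [MeasurableSpace X]

-- `L^* μ = λ μ`, tested against integrable functions.
def IsConformal (μ : Measure X) (σ : A → X → X) (w : A → X → ℝ) (lam : ℝ) : Prop :=
  ∀ φ : X → ℝ, Integrable φ μ → ∫ x, transferOp σ w φ x ∂μ = lam * ∫ x, φ x ∂μ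

variable {μ : Measure X} {lam C : ℝ}

lemma measurable_transferOp (hσ : ∀ a, Measurable (σ a)) (hw : ∀ a, Measurable (w a))
    {φ : X → ℝ} (hφ : Measurable φ) : Measurable (transferOp σ w φ) :=
  Finset.measurable_fun_sum _ fun a _ => (hφ.comp (hσ a)).mul (hw a)

lemma integrable_transferOp_of_bounded [IsFiniteMeasure μ] (hσ : ∀ a, Measurable (σ a))
    (hw : ∀ a, Measurable (w a)) (hw0 : ∀ a x, 0 ≤ w a x) (hwC : ∀ a x, w a x ≤ C)
    {φ : X → ℝ} (hφ : Measurable φ) {M : ℝ} (hM : ∀ x, |φ x| ≤ M) :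
    Integrable (transferOp σ w φ) μ := by
  refine .of_bound (measurable_transferOp hσ hw hφ).aestronglyMeasurable
    (Fintype.card A * (M * C)) (ae_of_all _ fun x => (abs_transferOp_le hw0 φ x).trans ?_)
  calc ∑ a, |φ (σ a x)| * w a x ≤ ∑ _a : A, M * C :=
        sum_le_sum fun a _ =>
          mul_le_mul (hM (σ a x)) (hwC a x) (hw0 a x) ((abs_nonneg _).trans (hM (σ a x)))
    _ = Fintype.card A * (M * C) := by simp

lemma integrable_transferOp_of_nonneg [IsFiniteMeasure μ] (hσ : ∀ a, Measurable (σ a))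
    (hw : ∀ a, Measurable (w a)) (hw0 : ∀ a x, 0 ≤ w a x) (hwC : ∀ a x, w a x ≤ C)
    (hconf : IsConformal μ σ w lam) {φ : X → ℝ} (hφm : Measurable φ) (hφ0 : 0 ≤ φ)
    (hφ : Integrable φ μ) : Integrable (transferOp σ w φ) μ := by
  -- `hconf` says nothing about `∫ L φ` before `L φ` is known to be integrable, so pass through
  -- the truncations `min φ n`, whose images are bounded, and use monotone convergence.
  set φn : ℕ → X → ℝ := fun n y => min (φ y) n
  have hφn_meas (n : ℕ) : Measurable (φn n) := hφm.min measurable_const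
  have hφn_abs (n : ℕ) (y : X) : |φn n y| ≤ min (φ y) n := by
    rw [abs_of_nonneg (le_min (hφ0 y) n.cast_nonneg)]
  have hφn_int (n : ℕ) : Integrable (φn n) μ :=
    hφ.mono' (hφn_meas n).aestronglyMeasurable
      (ae_of_all _ fun y => (hφn_abs n y).trans (min_le_left _ _))
  have hLn_int (n : ℕ) : Integrable (transferOp σ w (φn n)) μ :=
    integrable_transferOp_of_bounded hσ hw hw0 hwC (hφn_meas n)
      fun y => (hφn_abs n y).trans (min_le_right _ _)
  refine ⟨(measurable_transferOp hσ hw hφm).aestronglyMeasurable, ?_⟩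
  rw [hasFiniteIntegral_iff_ofReal (ae_of_all _ (transferOp_nonneg hw0 hφ0))]
  calc ∫⁻ x, ENNReal.ofReal (transferOp σ w φ x) ∂μ
      = ⨆ n : ℕ, ∫⁻ x, ENNReal.ofReal (transferOp σ w (φn n) x) ∂μ := by
        simp_rw [φn, ← iSup_ofReal_transferOp_min hw0 (φ := φ)]
        refine lintegral_iSup
          (fun n => (measurable_transferOp hσ hw (hφn_meas n)).ennreal_ofReal)
          fun m n hmn x => ENNReal.ofReal_le_ofReal (transferOp_mono hw0 (fun y => ?_) x)
        exact min_le_min_left _ (Nat.cast_le.2 hmn)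
    _ ≤ ENNReal.ofReal (|lam| * ∫ x, φ x ∂μ) := iSup_le fun n => by
        rw [← ofReal_integral_eq_lintegral_ofReal (hLn_int n)
          (ae_of_all _ (transferOp_nonneg hw0 fun y => le_min (hφ0 y) n.cast_nonneg)),
          hconf _ (hφn_int n)]
        have hφn_nonneg : 0 ≤ ∫ x, φn n x ∂μ :=
          integral_nonneg fun y => le_min (hφ0 y) n.cast_nonneg
        refine ENNReal.ofReal_le_ofReal <|
          (mul_le_mul_of_nonneg_right (le_abs_self lam) hφn_nonneg).trans ?_
        exact mul_le_mul_of_nonneg_left (integral_mono (hφn_int n) hφ fun y => min_le_left _ _)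
          (abs_nonneg lam)
    _ < ⊤ := ENNReal.ofReal_lt_top

lemma quasiMeasurePreserving_branch [IsFiniteMeasure μ] (hσ : ∀ a, Measurable (σ a))
    (hw : ∀ a, Measurable (w a)) (hw0 : ∀ a x, 0 < w a x) (hwC : ∀ a x, w a x ≤ C)
    (hconf : IsConformal μ σ w lam) (a : A) : Measure.QuasiMeasurePreserving (σ a) μ μ := by
  refine ⟨hσ a, Measure.AbsolutelyContinuous.mk fun S hS hS0 => ?_⟩
  rw [Measure.map_apply (hσ a) hS, measure_eq_zero_iff_ae_notMem]
  set f : X → ℝ := S.indicator 1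
  have hf0 : 0 ≤ f := Set.indicator_nonneg fun _ _ => zero_le_one
  have hLf : transferOp σ w f =ᵐ[μ] 0 := by
    rw [← integral_eq_zero_iff_of_nonneg (transferOp_nonneg (fun a x => (hw0 a x).le) hf0)
      (integrable_transferOp_of_bounded hσ hw (fun a x => (hw0 a x).le) hwC
        (measurable_const.indicator hS) (M := 1) fun x => ?_),
      hconf f ((integrable_const 1).indicator hS), integral_indicator_one hS,
      measureReal_def, hS0, ENNReal.toReal_zero, mul_zero]
    rw [abs_of_nonneg (hf0 x)]
    exact Set.indicator_le_self' (fun _ _ => zero_le_one) x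
  filter_upwards [hLf] with x hx hmem
  have hterm : f (σ a x) * w a x ≤ transferOp σ w f x :=
    single_le_sum (f := fun b => f (σ b x) * w b x)
      (fun b _ => mul_nonneg (hf0 _) (hw0 b x).le) (mem_univ a)
  rw [hx, Pi.zero_apply, show f (σ a x) = 1 from Set.indicator_of_mem (s := S) hmem 1,
    one_mul] at hterm
  exact (hw0 a x).not_ge hterm

lemma quasiMeasurePreserving_of_leftInverse [IsFiniteMeasure μ] {T : X → X}
    (hT : Measurable T) (hTσ : ∀ a x, T (σ a x) = x) (hconf : IsConformal μ σ w lam)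
    (hlam : lam ≠ 0) :
    Measure.QuasiMeasurePreserving T μ μ := by
  refine ⟨hT, Measure.AbsolutelyContinuous.mk fun S hS hS0 => ?_⟩
  rw [Measure.map_apply hT hS]
  -- `L (1_S ∘ T) = 1_S · ∑ₐ w a` because `T` undoes every branch.
  have hL : transferOp σ w ((T ⁻¹' S).indicator 1) =ᵐ[μ] 0 := by
    filter_upwards [measure_eq_zero_iff_ae_notMem.1 hS0] with x hx
    simp [transferOp, hTσ, hx]
  have h := hconf ((T ⁻¹' S).indicator 1) ((integrable_const (1 : ℝ)).indicator (hT hS))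
  rw [integral_congr_ae hL, Pi.zero_def, integral_zero, integral_indicator_one (hT hS)] at h
  exact (measureReal_eq_zero_iff).1 ((mul_eq_zero.1 h.symm).resolve_left hlam)

lemma transferOp_congr_ae (hσ : ∀ a, Measure.QuasiMeasurePreserving (σ a) μ μ) {φ ψ : X → ℝ}
    (h : φ =ᵐ[μ] ψ) : transferOp σ w φ =ᵐ[μ] transferOp σ w ψ := by
  filter_upwards [ae_all_iff.2 fun a => (hσ a).ae_eq h] with x hx
  exact sum_congr rfl fun a _ => congrArg (· * w a x) (hx a)

lemma transferOp_abs_ae_eq [IsFiniteMeasure μ] (hσ : ∀ a, Measurable (σ a))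
    (hw : ∀ a, Measurable (w a)) (hw0 : ∀ a x, 0 ≤ w a x) (hwC : ∀ a x, w a x ≤ C)
    (hconf : IsConformal μ σ w lam) (hlam : 0 ≤ lam) {φ : X → ℝ} (hφm : Measurable φ)
    (hφ : Integrable φ μ) (heig : ∀ᵐ x ∂μ, transferOp σ w φ x = lam * φ x) :
    ∀ᵐ x ∂μ, transferOp σ w (fun y => |φ y|) x = lam * |φ x| := by
  have hle : (fun x => lam * |φ x|) ≤ᵐ[μ] transferOp σ w fun y => |φ y| := by
    filter_upwards [heig] with x hx
    rw [← abs_of_nonneg hlam, ← abs_mul, ← hx]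
    exact abs_transferOp_le hw0 φ x
  have hint := integrable_transferOp_of_nonneg hσ hw hw0 hwC hconf hφm.abs
    (fun x => abs_nonneg (φ x)) hφ.abs
  exact ((integral_eq_iff_of_ae_le (hφ.abs.const_mul lam) hint hle).1
    (by rw [integral_const_mul, hconf _ hφ.abs])).symm

lemma ae_pos_of_pos_branch [IsFiniteMeasure μ] (hσ : ∀ a, Measurable (σ a))
    (hw : ∀ a, Measurable (w a)) (hw0 : ∀ a x, 0 < w a x) (hwC : ∀ a x, w a x ≤ C)
    (hconf : IsConformal μ σ w lam) (hlam : 0 < lam) {φ : X → ℝ} (hφm : Measurable φ)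
    (hφ : Integrable φ μ) (heig : ∀ᵐ x ∂μ, transferOp σ w φ x = lam * φ x) :
    ∀ᵐ x ∂μ, ∀ a, 0 < φ (σ a x) → 0 < φ x := by
  filter_upwards [heig, transferOp_abs_ae_eq hσ hw (fun a x => (hw0 a x).le) hwC hconf hlam.le
    hφm hφ heig] with x hx habs a ha
  have hsum : |∑ b, φ (σ b x) * w b x| = ∑ b, |φ (σ b x) * w b x| := by
    simp only [abs_mul, abs_of_pos (hw0 _ x)]
    rw [← transferOp, hx, abs_mul, abs_of_pos hlam, ← habs, transferOp]
  have hpos := sum_pos_of_abs_sum_eq_sum_abs hsum (mem_univ a) (mul_pos ha (hw0 a x))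
  rw [← transferOp, hx] at hpos
  exact pos_of_mul_pos_right hpos hlam.le

end TransferOperator

section Shift

variable {A : Type*}

def seqShift (x : ℕ → A) : ℕ → A := fun n => x (n + 1)

lemma seqShift_consSeq (a : A) (x : ℕ → A) : seqShift (consSeq a x) = x := rfl

lemma consSeq_head_seqShift (x : ℕ → A) : consSeq (x 0) (seqShift x) = x := by
  funext n
  cases n <;> rfl

lemma seqShift_iterate_apply (n : ℕ) (x : ℕ → A) (i : ℕ) : seqShift^[n] x i = x (i + n) := by
  induction n generalizing x with
  | zero => rfl
  | succ n ih => rw [Function.iterate_succ_apply, ih]; rfl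

variable [MeasurableSpace A]

lemma measurable_consSeq (a : A) : Measurable (consSeq a) :=
  measurable_pi_lambda _ fun n => by
    cases n
    exacts [measurable_const, measurable_pi_apply _]

lemma measurable_seqShift : Measurable (seqShift : (ℕ → A) → ℕ → A) :=
  measurable_pi_lambda _ fun n => measurable_pi_apply (n + 1)

lemma measure_zero_or_one_of_seqShift_invariant {μ : Measure (ℕ → A)}
    (hind : iIndepFun (fun i (x : ℕ → A) => x i) μ) {E : Set (ℕ → A)} (hE : MeasurableSet E)
    (hinv : seqShift ⁻¹' E = E) : μ E = 0 ∨ μ E = 1 := by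
  refine measure_zero_or_one_of_measurableSet_limsup_atTop
    (fun n => (measurable_pi_apply n).comap_le) ((iIndepFun_iff_iIndep _ _ _).1 hind) ?_
  rw [limsup_eq_iInf_iSup_of_nat, MeasurableSpace.measurableSet_iInf]
  intro n
  have hEn : seqShift^[n] ⁻¹' E = E := by
    induction n with
    | zero => rfl
    | succ n ih => rw [Function.iterate_succ, Set.preimage_comp, ih, hinv]
  rw [← hEn]
  refine (@measurable_pi_iff _ _ _ (⨆ i ≥ n, _) _ _).2 (fun i => ?_) hE
  simp_rw [seqShift_iterate_apply]
  exact comap_measurable (fun x : ℕ → A => x (i + n)) |>.mono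
    (le_iSup₂_of_le (i + n) (Nat.le_add_left n i) le_rfl) le_rfl

end Shift

lemma eq_infinitePi_of_measure_cylinder {A : Type*} [Countable A] [Nonempty A]
    [MeasurableSpace A] [MeasurableSingletonClass A] (ν : ℕ → Measure A)
    [∀ i, IsProbabilityMeasure (ν i)] {μ : Measure (ℕ → A)}
    (hcyl : ∀ (n : ℕ) (a : ℕ → A), μ {x | ∀ i < n, x i = a i} = ∏ i ∈ range n, ν i {a i}) :
    μ = Measure.infinitePi ν := by
  classical
  refine ((Measure.isProjectiveLimit_infinitePi ν).unique fun I => ?_).symm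
  obtain ⟨N, hIN⟩ : ∃ N, I ⊆ range N := ⟨I.sup id + 1, fun i hi =>
    mem_range.2 (Nat.lt_succ_of_le (le_sup (f := id) hi))⟩
  have hN : μ.map (range N).restrict = Measure.pi fun i : range N => ν i := by
    refine Measure.ext_iff_singleton.2 fun b => ?_
    set a : ℕ → A := fun i => if h : i ∈ range N then b ⟨i, h⟩ else Classical.arbitrary A
    have hpre : (range N).restrict ⁻¹' ({b} : Set (range N → A)) =
        {x | ∀ i < N, x i = a i} := by
      ext x
      simp +contextual [funext_iff, a]
    rw [Measure.map_apply (measurable_restrict _) (measurableSet_singleton b),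
      Measure.pi_singleton, hpre, hcyl, ← prod_coe_sort]
    exact prod_congr rfl fun i _ => by simp [a, mem_range.1 i.2]
  rw [← restrict₂_comp_restrict hIN, ← Measure.map_map (measurable_restrict₂ hIN)
    (measurable_restrict _), hN]
  exact (isProjectiveMeasureFamily_pi ν _ _ hIN).symm

lemma iIndepFun_eval_of_measure_cylinder {A : Type*} [Fintype A] [Nonempty A]
    [MeasurableSpace A] [MeasurableSingletonClass A] {μ : Measure (ℕ → A)} (p : ℕ → A → ℝ)
    (hp0 : ∀ i a, 0 ≤ p i a) (hp1 : ∀ i, ∑ a, p i a = 1)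
    (hcyl : ∀ (n : ℕ) (a : ℕ → A),
      μ {x | ∀ i < n, x i = a i} = ∏ i ∈ range n, ENNReal.ofReal (p i (a i))) :
    iIndepFun (fun i (x : ℕ → A) => x i) μ := by
  have hν (i : ℕ) : ∑ a, ENNReal.ofReal (p i a) = 1 := by
    rw [← ENNReal.ofReal_sum_of_nonneg fun a _ => hp0 i a, hp1, ENNReal.ofReal_one]
  rw [eq_infinitePi_of_measure_cylinder (μ := μ) (fun i => (PMF.ofFintype _ (hν i)).toMeasure)
    fun n a => hcyl n a ▸ prod_congr rfl fun i _ => by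
      rw [PMF.toMeasure_apply_singleton _ _ (measurableSet_singleton _), PMF.ofFintype_apply]]
  exact iIndepFun_infinitePi (X := fun _ => id) fun _ => measurable_id

section Potential

variable {A : Type*} {g : ℕ → A → ℝ} {v : ℕ → ℝ}

lemma summable_log_potential (hv : ∀ k a, |log (g (k + 1) a)| ≤ v k) (hl1 : Summable v)
    (y : ℕ → A) : Summable fun k => log (g k (y k)) :=
  (summable_nat_add_iff 1).1 (hl1.of_norm_bounded fun k => hv k (y (k + 1)))

lemma tprod_potential_eq_exp (hg : ∀ k a, 0 < g k a) (hv : ∀ k a, |log (g (k + 1) a)| ≤ v k)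
    (hl1 : Summable v) (y : ℕ → A) :
    ∏' k, g k (y k) = exp (∑' k, log (g k (y k))) :=
  (rexp_tsum_eq_tprod (fun k => hg k (y k)) (summable_log_potential hv hl1 y)).symm

lemma tprod_potential_pos (hg : ∀ k a, 0 < g k a) (hv : ∀ k a, |log (g (k + 1) a)| ≤ v k)
    (hl1 : Summable v) (y : ℕ → A) : 0 < ∏' k, g k (y k) := by
  rw [tprod_potential_eq_exp hg hv hl1]
  exact exp_pos _

lemma tprod_potential_le [Fintype A] (hg : ∀ k a, 0 < g k a)
    (hv : ∀ k a, |log (g (k + 1) a)| ≤ v k) (hl1 : Summable v) (y : ℕ → A) :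
    ∏' k, g k (y k) ≤ exp (∑ a, |log (g 0 a)| + ∑' k, v k) := by
  rw [tprod_potential_eq_exp hg hv hl1, (summable_log_potential hv hl1 y).tsum_eq_zero_add]
  refine exp_le_exp.2 (add_le_add ?_ ?_)
  · exact (le_abs_self _).trans <|
      single_le_sum (f := fun a => |log (g 0 a)|) (fun a _ => abs_nonneg _) (mem_univ (y 0))
  · exact ((summable_nat_add_iff 1).2 (summable_log_potential hv hl1 y)).tsum_le_tsum
      (fun k => (le_abs_self _).trans (hv k _)) hl1

lemma measurable_tprod_potential [Finite A] [MeasurableSpace A] [MeasurableSingletonClass A] :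
    Measurable fun y : ℕ → A => ∏' k, g k (y k) :=
  Measurable.tprod fun k => (measurable_of_finite (g k)).comp (measurable_pi_apply k)

end Potential

section ShiftTransfer

variable {A : Type*} [Fintype A] [MeasurableSpace A] {μ : Measure (ℕ → A)}
  {w : A → (ℕ → A) → ℝ} {lam C : ℝ}

lemma ae_mem_liminf_of_pos [IsFiniteMeasure μ] (hw : ∀ a, Measurable (w a))
    (hw0 : ∀ a x, 0 < w a x) (hwC : ∀ a x, w a x ≤ C) (hconf : IsConformal μ consSeq w lam)
    (hlam : 0 < lam) {φ : (ℕ → A) → ℝ} (hφm : Measurable φ) (hφ : Integrable φ μ)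
    (heig : ∀ᵐ x ∂μ, transferOp consSeq w φ x = lam * φ x) :
    ∀ᵐ x ∂μ, 0 < φ x → x ∈ liminf (fun n => seqShift^[n] ⁻¹' {y | 0 < φ y}) atTop := by
  have hT := quasiMeasurePreserving_of_leftInverse measurable_seqShift seqShift_consSeq hconf
    hlam.ne'
  have hstep : ∀ᵐ x ∂μ, 0 < φ x → 0 < φ (seqShift x) := by
    filter_upwards [hT.ae (ae_pos_of_pos_branch measurable_consSeq hw hw0 hwC hconf hlam hφm hφ
      heig)] with x hx
    simpa only [consSeq_head_seqShift] using hx (x 0)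
  filter_upwards [hT.ae_forall_iterate_mem hstep] with x hx hpos
  exact mem_liminf_iff_eventually_mem.2 (Eventually.of_forall (hx hpos))

lemma ae_nonpos_or_ae_nonneg_of_eigen (hind : iIndepFun (fun i (x : ℕ → A) => x i) μ)
    (hw : ∀ a, Measurable (w a)) (hw0 : ∀ a x, 0 < w a x)
    (hwC : ∀ a x, w a x ≤ C) (hconf : IsConformal μ consSeq w lam) (hlam : 0 < lam)
    {φ : (ℕ → A) → ℝ} (hφm : Measurable φ) (hφ : Integrable φ μ)
    (heig : ∀ᵐ x ∂μ, transferOp consSeq w φ x = lam * φ x) :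
    (∀ᵐ x ∂μ, φ x ≤ 0) ∨ ∀ᵐ x ∂μ, 0 ≤ φ x := by
  have : IsProbabilityMeasure μ := hind.isProbabilityMeasure
  set Q : ((ℕ → A) → ℝ) → Set (ℕ → A) :=
    fun ψ => liminf (fun n => seqShift^[n] ⁻¹' {y | 0 < ψ y}) atTop
  have hQ_meas (ψ : (ℕ → A) → ℝ) (hψ : Measurable ψ) : MeasurableSet (Q ψ) :=
    MeasurableSet.measurableSet_liminf fun n =>
      (measurable_seqShift.iterate n) (measurableSet_lt measurable_const hψ)
  have hQ01 (ψ : (ℕ → A) → ℝ) (hψ : Measurable ψ) : μ (Q ψ) = 0 ∨ μ (Q ψ) = 1 :=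
    measure_zero_or_one_of_seqShift_invariant hind (hQ_meas ψ hψ)
      (preimage_liminf_preimage_iterate _ _)
  have hdisj : Disjoint (Q φ) (Q (-φ)) := by
    refine Set.disjoint_left.2 fun x h₁ h₂ => ?_
    obtain ⟨n, hn₁, hn₂⟩ := ((mem_liminf_iff_eventually_mem.1 h₁).and
      (mem_liminf_iff_eventually_mem.1 h₂)).exists
    exact lt_asymm hn₁ (neg_pos.1 (show 0 < -φ (seqShift^[n] x) from hn₂))
  have hneg_eig : ∀ᵐ x ∂μ, transferOp consSeq w (-φ) x = lam * (-φ) x := by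
    filter_upwards [heig] with x hx
    rw [transferOp_neg, hx, Pi.neg_apply, mul_neg]
  have hpos := ae_mem_liminf_of_pos hw hw0 hwC hconf hlam hφm hφ heig
  have hneg := ae_mem_liminf_of_pos hw hw0 hwC hconf hlam hφm.neg hφ.neg hneg_eig
  rcases measure_eq_zero_or_of_disjoint hdisj (hQ_meas _ hφm.neg) (hQ01 φ hφm)
    (hQ01 (-φ) hφm.neg) with h | h
  · left
    filter_upwards [hpos, measure_eq_zero_iff_ae_notMem.1 h] with x h₁ h₂
    exact not_lt.1 fun hx => h₂ (h₁ hx)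
  · right
    filter_upwards [hneg, measure_eq_zero_iff_ae_notMem.1 h] with x h₁ h₂
    exact not_lt.1 fun hx => h₂ (h₁ (neg_pos.2 hx))

theorem ae_eq_zero_of_transferOp_eq_of_integral_eq_zero
    (hind : iIndepFun (fun i (x : ℕ → A) => x i) μ) (hw : ∀ a, Measurable (w a))
    (hw0 : ∀ a x, 0 < w a x) (hwC : ∀ a x, w a x ≤ C) (hconf : IsConformal μ consSeq w lam)
    (hlam : 0 < lam) {φ : (ℕ → A) → ℝ} (hφ : Integrable φ μ)
    (heig : ∀ᵐ x ∂μ, transferOp consSeq w φ x = lam * φ x) (h0 : ∫ x, φ x ∂μ = 0) :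
    φ =ᵐ[μ] 0 := by
  have : IsProbabilityMeasure μ := hind.isProbabilityMeasure
  obtain ⟨ψ, hψm, hφψ⟩ : ∃ ψ, Measurable ψ ∧ φ =ᵐ[μ] ψ :=
    ⟨_, hφ.aemeasurable.measurable_mk, hφ.aemeasurable.ae_eq_mk⟩
  have hψ : Integrable ψ μ := hφ.congr hφψ
  have hψ0 : ∫ x, ψ x ∂μ = 0 := by rwa [← integral_congr_ae hφψ]
  have hψeig : ∀ᵐ x ∂μ, transferOp consSeq w ψ x = lam * ψ x := by
    have hbranch := quasiMeasurePreserving_branch measurable_consSeq hw hw0 hwC hconf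
    filter_upwards [heig, transferOp_congr_ae hbranch hφψ, hφψ] with x hx hL hx'
    rw [← hL, hx, hx']
  refine hφψ.trans ?_
  rcases ae_nonpos_or_ae_nonneg_of_eigen hind hw hw0 hwC hconf hlam hψm hψ hψeig with h | h
  · have hneg : 0 ≤ᵐ[μ] -ψ := by filter_upwards [h] with x hx using neg_nonneg.2 hx
    filter_upwards [(integral_eq_zero_iff_of_nonneg_ae hneg hψ.neg).1
      (by rw [integral_neg', hψ0, neg_zero])] with x hx
    exact neg_eq_zero.1 hx
  · exact (integral_eq_zero_iff_of_nonneg_ae h hψ).1 hψ0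

end ShiftTransfer

theorem stmt_16_general {A : Type*} [Fintype A] [Nonempty A] [MeasurableSpace A]
    [MeasurableSingletonClass A]
    (g0 : ℝ) (hg0 : 0 < g0) (g : ℕ → A → ℝ) (hg : ∀ (k : ℕ) (a : A), 0 < g k a)
    (v : ℕ → ℝ) (hv : ∀ (k : ℕ) (a : A), |Real.log (g (k + 1) a)| ≤ v k)
    (hl1 : Summable v)
    (μ : Measure (ℕ → A))
    (hcyl : ∀ (n : ℕ) (a : ℕ → A),
      μ {x : ℕ → A | ∀ i < n, x i = a i} =
        ∏ i ∈ Finset.range n, ENNReal.ofReal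
          ((∏ l ∈ Finset.range (i + 1), g l (a i)) /
            ∑ b : A, ∏ l ∈ Finset.range (i + 1), g l b))
    (lam : ℝ) (hlam : lam = g0 * ∑ a : A, ∏' k : ℕ, g k a)
    (hdual : ∀ φ : (ℕ → A) → ℝ, Integrable φ μ →
      ∫ x, (∑ a : A, φ (consSeq a x) * (g0 * ∏' k : ℕ, g k (consSeq a x k))) ∂μ =
        lam * ∫ x, φ x ∂μ)
    (h₁ h₂ : (ℕ → A) → ℝ)
    (hi₁ : Integrable h₁ μ) (hi₂ : Integrable h₂ μ)
    (he₁ : ∀ᵐ x ∂μ,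
      ∑ a : A, h₁ (consSeq a x) * (g0 * ∏' k : ℕ, g k (consSeq a x k)) = lam * h₁ x)
    (he₂ : ∀ᵐ x ∂μ,
      ∑ a : A, h₂ (consSeq a x) * (g0 * ∏' k : ℕ, g k (consSeq a x k)) = lam * h₂ x)
    (hn₁ : ∫ x, h₁ x ∂μ = 1) (hn₂ : ∫ x, h₂ x ∂μ = 1) :
    h₁ =ᵐ[μ] h₂ := by
  set w : A → (ℕ → A) → ℝ := fun a x => g0 * ∏' k : ℕ, g k (consSeq a x k)
  have hw (a : A) : Measurable (w a) :=
    measurable_const.mul (measurable_tprod_potential.comp (measurable_consSeq a))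
  have hw0 (a : A) (x : ℕ → A) : 0 < w a x := mul_pos hg0 (tprod_potential_pos hg hv hl1 _)
  have hwC (a : A) (x : ℕ → A) : w a x ≤ g0 * exp (∑ b, |log (g 0 b)| + ∑' k, v k) :=
    mul_le_mul_of_nonneg_left (tprod_potential_le hg hv hl1 _) hg0.le
  have hlam0 : 0 < lam := hlam ▸ mul_pos hg0
    (sum_pos (fun a _ => tprod_potential_pos hg hv hl1 fun _ => a) univ_nonempty)
  have hZ (i : ℕ) : 0 < ∑ b, ∏ l ∈ range (i + 1), g l b :=
    sum_pos (fun b _ => prod_pos fun l _ => hg l b) univ_nonempty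
  have hind := iIndepFun_eval_of_measure_cylinder _
    (fun i a => div_nonneg (prod_pos fun l _ => hg l a).le (hZ i).le)
    (fun i => by rw [← sum_div, div_self (hZ i).ne']) hcyl
  have heig : ∀ᵐ x ∂μ, transferOp consSeq w (h₁ - h₂) x = lam * (h₁ - h₂) x := by
    filter_upwards [he₁, he₂] with x hx₁ hx₂
    rw [transferOp_sub, Pi.sub_apply, mul_sub]
    exact congrArg₂ (· - ·) hx₁ hx₂
  have hzero := ae_eq_zero_of_transferOp_eq_of_integral_eq_zero hind hw hw0 hwC hdual hlam0
    (hi₁.sub hi₂) heig (by rw [integral_sub' hi₁ hi₂, hn₁, hn₂, sub_self])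
  filter_upwards [hzero] with x hx
  exact sub_eq_zero.1 hx

/-- Let `A` be finite, `μ` the conformal product measure for a summable,
ℓ1-bounded potential `g = g0 ∏ g_k` of product type (cylinder weights
`w_n(a) = ∏_{i≤n} g_i(a) / ∑_b ∏_{i≤n} g_i(b)`), `λ` the conformality parameter, with the
duality `∫ L_{log g}(φ) dμ = λ ∫ φ dμ`. Then there is at most one `h ∈ L¹(X,μ)` with
`L_{log g}(h) = λ h` and `∫ h dμ = 1`. -/
theorem stmt_16 {A : Type*} [Fintype A] [Nonempty A] [MeasurableSpace A]
    [MeasurableSingletonClass A]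
    (g0 : ℝ) (hg0 : 0 < g0) (g : ℕ → A → ℝ) (hg : ∀ (k : ℕ) (a : A), 0 < g k a)
    (v : ℕ → ℝ) (hv : ∀ (k : ℕ) (a : A), |Real.log (g (k + 1) a)| ≤ v k)
    (hl1 : Summable v)
    (μ : Measure (ℕ → A)) (hμ : IsProbabilityMeasure μ)
    (hcyl : ∀ (n : ℕ) (a : ℕ → A),
      μ {x : ℕ → A | ∀ i < n, x i = a i} =
        ∏ i ∈ Finset.range n, ENNReal.ofReal
          ((∏ l ∈ Finset.range (i + 1), g l (a i)) /
            ∑ b : A, ∏ l ∈ Finset.range (i + 1), g l b))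
    (lam : ℝ) (hlam : lam = g0 * ∑ a : A, ∏' k : ℕ, g k a)
    (hdual : ∀ φ : (ℕ → A) → ℝ, Integrable φ μ →
      ∫ x, (∑ a : A, φ (consSeq a x) * (g0 * ∏' k : ℕ, g k (consSeq a x k))) ∂μ =
        lam * ∫ x, φ x ∂μ)
    (h₁ h₂ : (ℕ → A) → ℝ)
    (hi₁ : Integrable h₁ μ) (hi₂ : Integrable h₂ μ)
    (he₁ : ∀ᵐ x ∂μ,
      ∑ a : A, h₁ (consSeq a x) * (g0 * ∏' k : ℕ, g k (consSeq a x k)) = lam * h₁ x)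
    (he₂ : ∀ᵐ x ∂μ,
      ∑ a : A, h₂ (consSeq a x) * (g0 * ∏' k : ℕ, g k (consSeq a x k)) = lam * h₂ x)
    (hn₁ : ∫ x, h₁ x ∂μ = 1) (hn₂ : ∫ x, h₂ x ∂μ = 1) :
    h₁ =ᵐ[μ] h₂ :=
  stmt_16_general g0 hg0 g hg v hv hl1 μ hcyl lam hlam hdual h₁ h₂ hi₁ hi₂ he₁ he₂ hn₁ hn₂
end

section
/- Consider the potential f(x) = Σ_{n=1}^∞ x_n n^{−γ} on {−1,1}^ℕ with γ > 1. The product measure μ = ⊗μ_i with μ_i({1}) = exp(Σ_{j=1}^i j^{−γ}) / (2 cosh(Σ_{j=1}^i j^{−γ})) and μ_i({−1}) = exp(−Σ_{j=1}^i j^{−γ}) / (2 cosh(Σ_{j=1}^i j^{−γ})) satisfies L*_f(μ) = λ μ with λ = 2 cosh(ζ(γ)), where ζ(γ) = Σ_{j=1}^∞ j^{−γ}; equivalently, μ is 1/e^f-conformal with parameter 2 cosh(ζ(γ)). -/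
/-!
Write `c_j = (j+1)^(-γ)`, `S_i = c_0 + ⋯ + c_i` and `μ_i(b) = e^{b S_i} / (2 cosh S_i)`.
Since `S_{i+1} = S_i + c_{i+1}`, one has `e^{b c_{i+1}} μ_i(b) = (cosh S_{i+1} / cosh S_i) μ_{i+1}(b)`,
so for the potential `f_{n+1}` truncated after `n + 1` terms the product of these factors
telescopes: `e^{f_{n+1}(a x)} ∏_{i<n} μ_i(x_i) = 2 cosh S_n ∏_{i≤n} μ_i((a x)_i)`. Summing over
cylinders, `∫ L_{f_{n+1}} ψ dμ = 2 cosh S_n ∫ ψ dμ` holds exactly whenever `ψ` depends only on the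
first `n + 1` coordinates. Apply this to `ψ = φ ∘ truncate (n + 1)` and let `n → ∞`: bounded
convergence applies on both sides since `f_{n+1} → f`, `S_n → ζ(γ)` and `φ ∘ truncate (n + 1) → φ`
pointwise, and `|L_{f_{n+1}} ψ| ≤ 2 ‖φ‖_∞ e^{ζ(γ)}`.
-/

open MeasureTheory

/-- The symbol `true ↦ 1`, `false ↦ −1`, identifying `Bool` with `{−1, 1}`. -/
def pmVal (b : Bool) : ℝ := if b then 1 else -1

open Filter Topology PiNat

lemma tendsto_integral_of_forall_norm_le {X E : Type*} [MeasurableSpace X]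
    [NormedAddCommGroup E] [NormedSpace ℝ E] {μ : Measure X} [IsFiniteMeasure μ]
    {F : ℕ → X → E} {f : X → E} {C : ℝ}
    (hF : ∀ n, AEStronglyMeasurable (F n) μ) (hC : ∀ n x, ‖F n x‖ ≤ C)
    (hlim : ∀ x, Tendsto (fun n => F n x) atTop (𝓝 (f x))) :
    Tendsto (fun n => ∫ x, F n x ∂μ) atTop (𝓝 (∫ x, f x ∂μ)) :=
  tendsto_integral_of_dominated_convergence (fun _ => C) hF (integrable_const C)
    (fun n => .of_forall (hC n)) (.of_forall hlim)

section Cylinders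

variable {α : Type*} [Inhabited α]

def extendFin (n : ℕ) (u : Fin n → α) : ℕ → α :=
  fun i => if h : i < n then u ⟨i, h⟩ else default

def truncate (n : ℕ) (x : ℕ → α) : ℕ → α :=
  extendFin n fun i => x i

lemma truncate_apply (n : ℕ) (x : ℕ → α) (i : ℕ) :
    truncate n x i = if i < n then x i else default := by
  simp [truncate, extendFin, dite_eq_ite]

lemma truncate_mem_cylinder (n : ℕ) (x : ℕ → α) : truncate n x ∈ cylinder x n :=
  fun i hi => by simp [truncate_apply, hi]

lemma dependsOn_truncate (n : ℕ) : DependsOn (truncate n : (ℕ → α) → ℕ → α) (Set.Iio n) :=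
  fun x y hxy => funext fun i => by
    by_cases hi : i < n
    · simp [truncate_apply, hi, hxy i hi]
    · simp [truncate_apply, hi]

lemma continuous_truncate [TopologicalSpace α] (n : ℕ) :
    Continuous (truncate n : (ℕ → α) → ℕ → α) := by
  refine continuous_pi fun i => ?_
  simp only [truncate_apply]
  split_ifs
  · exact continuous_apply i
  · exact continuous_const

lemma tendsto_truncate [TopologicalSpace α] (x : ℕ → α) :
    Tendsto (fun n => truncate n x) atTop (𝓝 x) :=
  tendsto_pi_nhds.2 fun i => tendsto_const_nhds.congr' <| by
    filter_upwards [eventually_gt_atTop i] with n hn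
    simp [truncate_apply, hn]

lemma extendFin_cons (n : ℕ) (a : α) (u : Fin n → α) :
    extendFin (n + 1) (Fin.cons a u) = consSeq a (extendFin n u) := by
  funext i
  cases i with
  | zero => simp [extendFin, consSeq]
  | succ j =>
    by_cases hj : j < n
    · simp [extendFin, consSeq, hj, ← Fin.succ_mk]
    · simp [extendFin, consSeq, hj]

theorem integral_eq_sum_cylinder [Fintype α] [MeasurableSpace α] [MeasurableSingletonClass α]
    {μ : Measure (ℕ → α)} [IsFiniteMeasure μ] {n : ℕ} {h : (ℕ → α) → ℝ}
    (hh : DependsOn h (Set.Iio n)) :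
    ∫ x, h x ∂μ = ∑ u : Fin n → α, μ.real (cylinder (extendFin n u) n) * h (extendFin n u) := by
  set r : (ℕ → α) → Fin n → α := fun x i => x i
  have hr : Measurable r := measurable_pi_lambda _ fun i => measurable_pi_apply _
  have hpre : ∀ u, r ⁻¹' {u} = cylinder (extendFin n u) n := fun u => by
    ext x
    simp +contextual [r, mem_cylinder_iff, funext_iff, extendFin, Fin.forall_iff]
  calc ∫ x, h x ∂μ = ∫ x, h (extendFin n (r x)) ∂μ :=
        integral_congr_ae <| .of_forall fun x => (hh (truncate_mem_cylinder n x)).symm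
    _ = ∫ u, h (extendFin n u) ∂μ.map r :=
        (integral_map (f := fun u => h (extendFin n u)) hr.aemeasurable
          Measurable.of_discrete.aestronglyMeasurable).symm
    _ = _ := by
        rw [integral_fintype .of_finite]
        simp [measureReal_def, Measure.map_apply hr (measurableSet_singleton _), hpre]

end Cylinders

section Ruelle

variable {α : Type*}

lemma DependsOn.comp_consSeq {β : Type*} {h : (ℕ → α) → β} {n : ℕ}
    (hh : DependsOn h (Set.Iio (n + 1))) (a : α) :
    DependsOn (fun x => h (consSeq a x)) (Set.Iio n) := fun x y hxy =>
  hh fun i hi => by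
    cases i with
    | zero => rfl
    | succ j => exact hxy j (Nat.succ_lt_succ_iff.1 hi)

lemma continuous_consSeq [TopologicalSpace α] (a : α) : Continuous (consSeq a) :=
  continuous_pi fun i => by
    cases i with
    | zero => exact continuous_const
    | succ j => exact continuous_apply j

variable [Fintype α]

noncomputable def ruelle (g ψ : (ℕ → α) → ℝ) (x : ℕ → α) : ℝ :=
  ∑ a, ψ (consSeq a x) * Real.exp (g (consSeq a x))

lemma DependsOn.ruelle {g ψ : (ℕ → α) → ℝ} {n : ℕ} (hg : DependsOn g (Set.Iio (n + 1)))
    (hψ : DependsOn ψ (Set.Iio (n + 1))) : DependsOn (ruelle g ψ) (Set.Iio n) := fun x y hxy =>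
  Finset.sum_congr rfl fun a _ => by
    rw [show ψ (consSeq a x) = ψ (consSeq a y) from hψ.comp_consSeq a hxy,
      show g (consSeq a x) = g (consSeq a y) from hg.comp_consSeq a hxy]

lemma Continuous.ruelle [TopologicalSpace α] {g ψ : (ℕ → α) → ℝ} (hg : Continuous g)
    (hψ : Continuous ψ) : Continuous (ruelle g ψ) :=
  continuous_finsetSum _ fun a _ =>
    (hψ.comp (continuous_consSeq a)).mul (Real.continuous_exp.comp (hg.comp (continuous_consSeq a)))

lemma abs_ruelle_le {g ψ : (ℕ → α) → ℝ} {B C : ℝ} (hg : ∀ x, g x ≤ B) (hψ : ∀ x, |ψ x| ≤ C)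
    (x : ℕ → α) : |ruelle g ψ x| ≤ Fintype.card α * (C * Real.exp B) := by
  calc |ruelle g ψ x| ≤ ∑ a, |ψ (consSeq a x) * Real.exp (g (consSeq a x))| :=
        Finset.abs_sum_le_sum_abs _ _
    _ ≤ ∑ _a : α, C * Real.exp B := Finset.sum_le_sum fun a _ => by
        rw [abs_mul, Real.abs_exp]
        exact mul_le_mul (hψ _) (Real.exp_le_exp.2 (hg _)) (Real.exp_pos _).le
          ((abs_nonneg _).trans (hψ x))
    _ = Fintype.card α * (C * Real.exp B) := by simp

lemma tendsto_ruelle {ι : Type*} {l : Filter ι} {g ψ : (ℕ → α) → ℝ} {G Ψ : ι → (ℕ → α) → ℝ}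
    (hG : ∀ x, Tendsto (fun k => G k x) l (𝓝 (g x)))
    (hΨ : ∀ x, Tendsto (fun k => Ψ k x) l (𝓝 (ψ x))) (x : ℕ → α) :
    Tendsto (fun k => ruelle (G k) (Ψ k) x) l (𝓝 (ruelle g ψ x)) :=
  tendsto_finsetSum _ fun _ _ => (hΨ _).mul ((Real.continuous_exp.tendsto _).comp (hG _))

end Ruelle

section Weights

variable (c : ℕ → ℝ)

def partialSum (i : ℕ) : ℝ := ∑ j ∈ Finset.range (i + 1), c j

noncomputable def coordWeight (i : ℕ) (b : Bool) : ℝ :=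
  Real.exp (pmVal b * partialSum c i) / (2 * Real.cosh (partialSum c i))

noncomputable def cylinderWeight (n : ℕ) (x : ℕ → Bool) : ℝ :=
  ∏ i ∈ Finset.range n, coordWeight c i (x i)

def truncPotential (n : ℕ) (x : ℕ → Bool) : ℝ := ∑ i ∈ Finset.range n, pmVal (x i) * c i

lemma cylinderWeight_succ (n : ℕ) (x : ℕ → Bool) :
    cylinderWeight c (n + 1) x = cylinderWeight c n x * coordWeight c n (x n) :=
  Finset.prod_range_succ _ n

lemma truncPotential_succ (n : ℕ) (x : ℕ → Bool) :
    truncPotential c (n + 1) x = truncPotential c n x + pmVal (x n) * c n :=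
  Finset.sum_range_succ _ n

lemma abs_pmVal (b : Bool) : |pmVal b| = 1 := by cases b <;> simp [pmVal]

lemma coordWeight_nonneg (i : ℕ) (b : Bool) : 0 ≤ coordWeight c i b := by
  unfold coordWeight; positivity

lemma two_cosh_mul_coordWeight (i : ℕ) (b : Bool) :
    2 * Real.cosh (partialSum c i) * coordWeight c i b = Real.exp (pmVal b * partialSum c i) :=
  mul_div_cancel₀ _ (by positivity)

lemma two_cosh_mul_exp_mul_coordWeight (i : ℕ) (b : Bool) :
    2 * Real.cosh (partialSum c i) * (Real.exp (pmVal b * c (i + 1)) * coordWeight c i b) =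
      2 * Real.cosh (partialSum c (i + 1)) * coordWeight c (i + 1) b := by
  rw [mul_left_comm, two_cosh_mul_coordWeight, two_cosh_mul_coordWeight, ← Real.exp_add,
    partialSum, partialSum, Finset.sum_range_succ _ (i + 1)]
  ring_nf

lemma exp_truncPotential_consSeq_mul_cylinderWeight (n : ℕ) (a : Bool) (x : ℕ → Bool) :
    Real.exp (truncPotential c (n + 1) (consSeq a x)) * cylinderWeight c n x =
      2 * Real.cosh (partialSum c n) * cylinderWeight c (n + 1) (consSeq a x) := by
  induction n with
  | zero =>
    simpa [truncPotential, cylinderWeight, partialSum, consSeq] using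
      (two_cosh_mul_coordWeight c 0 a).symm
  | succ n ih =>
    rw [truncPotential_succ, Real.exp_add, cylinderWeight_succ, cylinderWeight_succ c (n + 1)]
    simp only [consSeq]
    linear_combination (Real.exp (pmVal (x n) * c (n + 1)) * coordWeight c n (x n)) * ih +
      cylinderWeight c (n + 1) (consSeq a x) * two_cosh_mul_exp_mul_coordWeight c n (x n)

lemma dependsOn_truncPotential (n : ℕ) : DependsOn (truncPotential c n) (Set.Iio n) :=
  fun x y hxy => Finset.sum_congr rfl fun i hi => by rw [hxy i (Finset.mem_range.1 hi)]

lemma continuous_truncPotential (n : ℕ) : Continuous (truncPotential c n) :=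
  continuous_finsetSum _ fun i _ =>
    ((continuous_of_discreteTopology (f := pmVal)).comp (continuous_apply i)).mul continuous_const

lemma truncPotential_le_tsum_abs {c} (hc : Summable c) (n : ℕ) (x : ℕ → Bool) :
    truncPotential c n x ≤ ∑' i, |c i| :=
  calc truncPotential c n x ≤ ∑ i ∈ Finset.range n, |c i| := Finset.sum_le_sum fun i _ =>
        (le_abs_self _).trans_eq (by rw [abs_mul, abs_pmVal, one_mul])
    _ ≤ ∑' i, |c i| := hc.abs.sum_le_tsum _ fun i _ => abs_nonneg _

end Weights

section Conformal

variable {c : ℕ → ℝ} {μ : Measure (ℕ → Bool)} [IsFiniteMeasure μ]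

theorem integral_eq_sum_cylinderWeight
    (hμ : ∀ n a, μ (cylinder a n) = ∏ i ∈ Finset.range n, ENNReal.ofReal (coordWeight c i (a i)))
    {n : ℕ} {h : (ℕ → Bool) → ℝ} (hh : DependsOn h (Set.Iio n)) :
    ∫ x, h x ∂μ = ∑ u : Fin n → Bool, cylinderWeight c n (extendFin n u) * h (extendFin n u) := by
  rw [integral_eq_sum_cylinder hh]
  refine Fintype.sum_congr _ _ fun u => ?_
  rw [measureReal_def, hμ, ENNReal.toReal_prod, cylinderWeight]
  congr 1
  exact Finset.prod_congr rfl fun i _ => ENNReal.toReal_ofReal (coordWeight_nonneg c i _)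

theorem integral_ruelle_truncPotential
    (hμ : ∀ n a, μ (cylinder a n) = ∏ i ∈ Finset.range n, ENNReal.ofReal (coordWeight c i (a i)))
    {n : ℕ} {ψ : (ℕ → Bool) → ℝ} (hψ : DependsOn ψ (Set.Iio (n + 1))) :
    ∫ x, ruelle (truncPotential c (n + 1)) ψ x ∂μ =
      2 * Real.cosh (partialSum c n) * ∫ x, ψ x ∂μ := by
  rw [integral_eq_sum_cylinderWeight hμ ((dependsOn_truncPotential c (n + 1)).ruelle hψ),
    integral_eq_sum_cylinderWeight hμ hψ, ← (Fin.consEquiv fun _ => Bool).sum_comp,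
    Fintype.sum_prod_type, Finset.sum_comm, Finset.mul_sum]
  refine Fintype.sum_congr _ _ fun u => ?_
  rw [ruelle, Finset.mul_sum, Finset.mul_sum]
  refine Fintype.sum_congr _ _ fun a => ?_
  rw [show (Fin.consEquiv fun _ => Bool) (a, u) = Fin.cons a u from rfl, extendFin_cons]
  linear_combination ψ (consSeq a (extendFin n u)) *
    exp_truncPotential_consSeq_mul_cylinderWeight c n a (extendFin n u)

end Conformal

lemma summable_nat_add_one_rpow_neg {γ : ℝ} (hγ : 1 < γ) :
    Summable fun n : ℕ => ((n : ℝ) + 1) ^ (-γ) := by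
  simpa using (summable_nat_add_iff 1).2 (Real.summable_nat_rpow.2 (neg_lt_neg hγ))

/-- For `f(x) = ∑_n x_n n^{−γ}` on `{−1,1}^ℕ`, `γ > 1`, the product
measure with weights `μ_i(±1) = exp(± ∑_{j≤i} j^{−γ}) / (2 cosh(∑_{j≤i} j^{−γ}))`
satisfies `L_f^* μ = λ μ` with `λ = 2 cosh(ζ(γ))`, expressed by duality against
continuous test functions. -/
theorem stmt_18 (γ : ℝ) (hγ : 1 < γ)
    (μ : Measure (ℕ → Bool)) (hμ : IsProbabilityMeasure μ)
    (hcyl : ∀ (n : ℕ) (a : ℕ → Bool),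
      μ {x : ℕ → Bool | ∀ i < n, x i = a i} =
        ∏ i ∈ Finset.range n, ENNReal.ofReal
          (Real.exp (pmVal (a i) * ∑ j ∈ Finset.range (i + 1), ((j : ℝ) + 1) ^ (-γ)) /
            (2 * Real.cosh (∑ j ∈ Finset.range (i + 1), ((j : ℝ) + 1) ^ (-γ)))))
    (f : (ℕ → Bool) → ℝ)
    (hf : ∀ x : ℕ → Bool, HasSum (fun n => pmVal (x n) / ((n : ℝ) + 1) ^ γ) (f x)) :
    ∀ φ : (ℕ → Bool) → ℝ, Continuous φ →
      ∫ x, (∑ a : Bool, φ (consSeq a x) * Real.exp (f (consSeq a x))) ∂μ =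
        (2 * Real.cosh (∑' j : ℕ, ((j : ℝ) + 1) ^ (-γ))) * ∫ x, φ x ∂μ := by
  intro φ hφ
  set c : ℕ → ℝ := fun j => ((j : ℝ) + 1) ^ (-γ)
  have hc : Summable c := summable_nat_add_one_rpow_neg hγ
  have hfc (x : ℕ → Bool) : HasSum (fun n => pmVal (x n) * c n) (f x) :=
    (hf x).congr_fun fun n => by rw [div_eq_mul_inv, ← Real.rpow_neg (by positivity)]
  obtain ⟨C, hC⟩ := isCompact_univ.exists_bound_of_continuousOn hφ.continuousOn
  set ψ : ℕ → (ℕ → Bool) → ℝ := fun N => φ ∘ truncate (N + 1)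
  have hψC (N : ℕ) (x : ℕ → Bool) : |ψ N x| ≤ C := hC _ trivial
  have hψφ (x : ℕ → Bool) : Tendsto (fun N => ψ N x) atTop (𝓝 (φ x)) :=
    (hφ.tendsto x).comp ((tendsto_truncate x).comp (tendsto_add_atTop_nat 1))
  have hψ_cont (N : ℕ) : Continuous (ψ N) := hφ.comp (continuous_truncate _)
  have hLHS : Tendsto (fun N => ∫ x, ruelle (truncPotential c (N + 1)) (ψ N) x ∂μ) atTop
      (𝓝 (∫ x, ruelle f φ x ∂μ)) :=
    tendsto_integral_of_forall_norm_le
      (fun N => ((continuous_truncPotential c _).ruelle (hψ_cont N)).aestronglyMeasurable)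
      (fun N => abs_ruelle_le (truncPotential_le_tsum_abs hc _) (hψC N))
      (tendsto_ruelle (fun x => (hfc x).tendsto_sum_nat.comp (tendsto_add_atTop_nat 1)) hψφ)
  have hRHS : Tendsto (fun N => 2 * Real.cosh (partialSum c N) * ∫ x, ψ N x ∂μ) atTop
      (𝓝 (2 * Real.cosh (∑' j, c j) * ∫ x, φ x ∂μ)) :=
    (((Real.continuous_cosh.tendsto _).comp
      (hc.hasSum.tendsto_sum_nat.comp (tendsto_add_atTop_nat 1))).const_mul 2).mul
      (tendsto_integral_of_forall_norm_le (fun N => (hψ_cont N).aestronglyMeasurable) hψC hψφ)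
  have hψ (N : ℕ) : DependsOn (ψ N) (Set.Iio (N + 1)) := fun _ _ h =>
    congrArg φ (dependsOn_truncate _ h)
  exact tendsto_nhds_unique (hLHS.congr fun N => integral_ruelle_truncPotential hcyl (hψ N)) hRHS
end
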